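/- arXiv:2405.17948 — 8 statements merged into one kernel-verified Lean document; each statement's English description precedes it below -/
import Mathlib

section
/- Let C be a dendritic face complex and let x ∈ C with dim(x) ≥ 2. Then (a) there is a unique ρ ∈ δ(x) with γ(ρ) = γ(γ(x)); and (b) for every y ∈ δ(x) there is a unique finite sequence y = y₁, y₂, …, y_p = ρ (p ≥ 1) of elements of δ(x) such that γ(y_i) ∈ δ(y_{i+1}) for all 1 ≤ i < p. (In other words, δ(x) carries the structure of a rooted tree with root ρ.) -/
/-- The signed codimension-1 face relation: `true` stands for `≺⁺`, `false` for `≺⁻`. -/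
def sprec {α : Type*} (precN precP : α → α → Prop) : Bool → α → α → Prop
  | true => precP
  | false => precN

/-- A dendritic face complex (DFC) on a finite type `α` of faces: a positive-to-one
poset (graded by `dim`, with source relation `precN` = `≺⁻`, target relation
`precP` = `≺⁺`, and target map `tgt` = `γ`) together with a greatest element `top` = `ω`,
oriented thinness (`thin`), and acyclicity (`src_singleton`, `src_exists`, `no_cycle`). -/
structure DFC (α : Type*) [Fintype α] where
  dim : α → ℕ
  precN : α → α → Prop
  precP : α → α → Prop
  tgt : α → α
  dim_precN : ∀ {y x}, precN y x → dim x = dim y + 1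
  dim_precP : ∀ {y x}, precP y x → dim x = dim y + 1
  not_both : ∀ y x, ¬ (precN y x ∧ precP y x)
  tgt_precP : ∀ x, 1 ≤ dim x → precP (tgt x) x
  precP_unique : ∀ {y x}, precP y x → y = tgt x
  src_exists : ∀ x, 1 ≤ dim x → ∃ y, precN y x
  top : α
  le_top : ∀ x, Relation.ReflTransGen (fun a b => precN a b ∨ precP a b) x top
  thin : ∀ (a b : Bool) (x y z : α), sprec precN precP b z y → sprec precN precP a y x →
    ∃! y', y' ≠ y ∧ ∃ a' b', sprec precN precP b' z y' ∧ sprec precN precP a' y' x ∧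
      ((a = b) ↔ ¬ (a' = b'))
  src_singleton : ∀ x, dim x = 1 → ∃! y, precN y x
  no_cycle : ∀ (x : α) (p : ℕ), 1 ≤ p → ∀ y : ℕ → α,
    (∀ i, 1 ≤ i → i ≤ p → precN (y i) x) → y (p + 1) = y 1 →
    ¬ (∀ i, 1 ≤ i → i ≤ p → precN (tgt (y (i + 1))) (y i))

namespace DFC

variable {α : Type*} [Fintype α]

/-- `x ◁ y` : there is `t` with `x ≺⁻ t` and `y ≺⁺ t`. -/
def tri (D : DFC α) (x y : α) : Prop := ∃ t, D.precN x t ∧ D.precP y t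

/-- `<⁺` : the transitive closure of `◁`. -/
def ltP (D : DFC α) : α → α → Prop := Relation.TransGen D.tri

/-- The iterated target `γ^{(k)}ω ∈ C_k` (for `k ≤ n = dim ω`). -/
def itTgt (D : DFC α) (k : ℕ) : α := D.tgt^[D.dim D.top - k] D.top

/-- Membership in `Λ_k` : a `k`-dimensional face that is the target of no face. -/
def lam (D : DFC α) (k : ℕ) (x : α) : Prop := D.dim x = k ∧ ∀ c, ¬ D.precP x c

/-- A (possibly trivial) lower path from `c` to `c'` inside `δ(b)`, all of whose
lower witnesses `dᵢ` have `e` as a `≺^β`-face: `c = c₀ ≻⁻ d₀ ≺⁺ c₁ ≻⁻ d₁ ≺⁺ ⋯ ≺⁺ c_p = c'`. -/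
def lowerPath (D : DFC α) (β : Bool) (b e c c' : α) : Prop :=
  ∃ (p : ℕ) (cs ds : ℕ → α), cs 0 = c ∧ cs p = c' ∧
    (∀ i ≤ p, D.precN (cs i) b) ∧
    ∀ i < p, D.precN (ds i) (cs i) ∧ D.precP (ds i) (cs (i + 1)) ∧
      sprec D.precN D.precP β e (ds i)

/-- A non-trivial simple `δ(b)`-zig-zag from `c` to `c'`: first `r` ascending steps
`cᵢ ≻⁺ dᵢ ≺⁻ c_{i+1}` with `e ≺^β dᵢ`, then `p − r` descending steps
`cᵢ ≻⁻ dᵢ ≺⁺ c_{i+1}` with `e ≺^{−β} dᵢ`, with pairwise distinct `dᵢ`. -/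
def zigzag (D : DFC α) (β : Bool) (b e c c' : α) : Prop :=
  ∃ (p r : ℕ), 1 ≤ p ∧ r ≤ p ∧ ∃ cs ds : ℕ → α,
    cs 0 = c ∧ cs p = c' ∧ (∀ i ≤ p, D.precN (cs i) b) ∧
    (∀ i j, i < p → j < p → i ≠ j → ds i ≠ ds j) ∧
    (∀ i < r, D.precP (ds i) (cs i) ∧ D.precN (ds i) (cs (i + 1)) ∧
      sprec D.precN D.precP β e (ds i)) ∧
    (∀ i, r ≤ i → i < p → D.precN (ds i) (cs i) ∧ D.precP (ds i) (cs (i + 1)) ∧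
      sprec D.precN D.precP (!β) e (ds i))

end DFC

namespace DFCAux

@[simp] lemma sprec_true {α : Type*} (pN pP : α → α → Prop) : sprec pN pP true = pP := rfl
@[simp] lemma sprec_false {α : Type*} (pN pP : α → α → Prop) : sprec pN pP false = pN := rfl

variable {α : Type*} [Fintype α] (D : DFC α) (x : α)

lemma dim_src (hx : 2 ≤ D.dim x) {y : α} (hy : D.precN y x) : 1 ≤ D.dim y := by
  have := D.dim_precN hy; omega

/-- Each `y ∈ δ(x)` is either a root or has a successor. -/
lemma step (hx : 2 ≤ D.dim x) {y : α} (hy : D.precN y x) :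
    D.tgt y = D.tgt (D.tgt x) ∨ ∃ z, D.precN z x ∧ D.precN (D.tgt y) z := by
  obtain ⟨y', ⟨hne, a', b', hb', ha', hiff⟩, huniq⟩ :=
    D.thin false true x y (D.tgt y) (D.tgt_precP y (dim_src D x hx hy)) hy
  have hab : a' = b' := by by_contra h; exact absurd (hiff.mpr h) (by simp)
  cases a' <;> cases b' <;> simp_all
  · exact Or.inr ⟨y', ha', hb'⟩
  · left
    have h1 : y' = D.tgt x := D.precP_unique ha'
    have h2 : D.tgt y = D.tgt y' := D.precP_unique hb'
    rw [h2, h1]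

lemma succ_unique (hx : 2 ≤ D.dim x) {y z z' : α} (hy : D.precN y x)
    (hz : D.precN z x) (hz' : D.precN z' x)
    (h1 : D.precN (D.tgt y) z) (h2 : D.precN (D.tgt y) z') : z = z' := by
  obtain ⟨y', _, huniq⟩ :=
    D.thin false true x y (D.tgt y) (D.tgt_precP y (dim_src D x hx hy)) hy
  have w : ∀ w, D.precN w x → D.precN (D.tgt y) w → w = y' := by
    intro w hw hw'
    refine huniq w ⟨fun h => D.not_both (D.tgt y) y ⟨h ▸ hw', D.tgt_precP y (dim_src D x hx hy)⟩,
      false, false, hw', hw, by simp⟩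
  rw [w z hz h1, w z' hz' h2]

lemma root_no_succ (hx : 2 ≤ D.dim x) {y z : α} (hy : D.precN y x)
    (hroot : D.tgt y = D.tgt (D.tgt x)) (hz : D.precN z x)
    (hzy : D.precN (D.tgt y) z) : False := by
  obtain ⟨y', _, huniq⟩ :=
    D.thin false true x y (D.tgt y) (D.tgt_precP y (dim_src D x hx hy)) hy
  have hdx : 1 ≤ D.dim x := by omega
  have htx : D.precP (D.tgt x) x := D.tgt_precP x hdx
  have hdtx : 1 ≤ D.dim (D.tgt x) := by have := D.dim_precP htx; omega
  have hw1 : z = y' := huniq z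
    ⟨fun h => D.not_both (D.tgt y) y ⟨h ▸ hzy, D.tgt_precP y (dim_src D x hx hy)⟩,
      false, false, hzy, hz, by simp⟩
  have hw2 : D.tgt x = y' := huniq (D.tgt x)
    ⟨fun h => D.not_both y x ⟨hy, h ▸ htx⟩,
      true, true, hroot ▸ D.tgt_precP (D.tgt x) hdtx, htx, by simp⟩
  exact D.not_both z x ⟨hz, (hw1.trans hw2.symm) ▸ htx⟩

lemma root_unique (hx : 2 ≤ D.dim x) {ρ ρ' : α}
    (h1 : D.precN ρ x ∧ D.tgt ρ = D.tgt (D.tgt x))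
    (h2 : D.precN ρ' x ∧ D.tgt ρ' = D.tgt (D.tgt x)) : ρ = ρ' := by
  have hdx : 1 ≤ D.dim x := by omega
  have htx : D.precP (D.tgt x) x := D.tgt_precP x hdx
  have hdtx : 1 ≤ D.dim (D.tgt x) := by have := D.dim_precP htx; omega
  obtain ⟨y', _, huniq⟩ :=
    D.thin true true x (D.tgt x) (D.tgt (D.tgt x)) (D.tgt_precP (D.tgt x) hdtx) htx
  have w : ∀ w, D.precN w x → D.tgt w = D.tgt (D.tgt x) → w = y' := by
    intro w hw hw'
    have hdw : 1 ≤ D.dim w := dim_src D x hx hw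
    refine huniq w ⟨fun h => D.not_both w x ⟨hw, h ▸ htx⟩,
      false, true, hw' ▸ D.tgt_precP w hdw, hw, by simp⟩
  rw [w ρ h1.1 h1.2, w ρ' h2.1 h2.2]



open Classical in
noncomputable def nxt (y : α) : α :=
  if h : ∃ z, D.precN z x ∧ D.precN (D.tgt y) z then h.choose else y

lemma nxt_spec {y : α} (h : ∃ z, D.precN z x ∧ D.precN (D.tgt y) z) :
    D.precN (nxt D x y) x ∧ D.precN (D.tgt y) (nxt D x y) := by
  rw [nxt, dif_pos h]; exact h.choose_spec

lemma orbit_mem (hx : 2 ≤ D.dim x) {y : α} (hy : D.precN y x) :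
    ∀ k, D.precN ((nxt D x)^[k] y) x := by
  intro k
  induction k with
  | zero => exact hy
  | succ k ih =>
    rw [Function.iterate_succ_apply']
    by_cases h : ∃ z, D.precN z x ∧ D.precN (D.tgt ((nxt D x)^[k] y)) z
    · exact (nxt_spec D x h).1
    · rw [nxt, dif_neg h]; exact ih

lemma orbit_step (hx : 2 ≤ D.dim x) {y : α} (hy : D.precN y x) {k : ℕ}
    (h : D.tgt ((nxt D x)^[k] y) ≠ D.tgt (D.tgt x)) :
    D.precN (D.tgt ((nxt D x)^[k] y)) ((nxt D x)^[k+1] y) := by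
  have hmem := orbit_mem D x hx hy k
  have hex : ∃ z, D.precN z x ∧ D.precN (D.tgt ((nxt D x)^[k] y)) z :=
    (step D x hx hmem).resolve_left h
  rw [Function.iterate_succ_apply']
  exact (nxt_spec D x hex).2

lemma reach_root (hx : 2 ≤ D.dim x) {y : α} (hy : D.precN y x) :
    ∃ k, D.tgt ((nxt D x)^[k] y) = D.tgt (D.tgt x) := by
  by_contra h
  push_neg at h
  set u : ℕ → α := fun k => (nxt D x)^[k] y with hu
  have hmem : ∀ k, D.precN (u k) x := orbit_mem D x hx hy
  have hstep : ∀ k, D.precN (D.tgt (u k)) (u (k+1)) := fun k => orbit_step D x hx hy (h k)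
  obtain ⟨i, j, hne, hij⟩ := Finite.exists_ne_map_eq_of_infinite u
  wlog hlt : i < j generalizing i j
  · exact this j i hne.symm hij.symm (by omega)
  set p := j - i with hp
  have hp1 : 1 ≤ p := by omega
  set Y : ℕ → α := fun m => if m = p + 1 then u (j - 1) else u (j - m) with hY
  refine D.no_cycle x p hp1 Y (fun m h1 h2 => ?_) ?_ (fun m h1 h2 => ?_)
  · show D.precN (if m = p + 1 then u (j-1) else u (j - m)) x
    rw [if_neg (by omega)]; exact hmem _
  · show (if p + 1 = p + 1 then u (j-1) else u (j - (p+1))) =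
      (if 1 = p + 1 then u (j-1) else u (j - 1))
    rw [if_pos rfl, if_neg (by omega)]
  · -- D.precN (D.tgt (Y (m+1))) (Y m)
    rcases eq_or_lt_of_le h2 with hm | hm
    · have e1 : Y (p + 1) = u (j - 1) := if_pos rfl
      have e2 : Y p = u ((j-1) + 1) := by
        show (if p = p + 1 then _ else u (j - p)) = _
        rw [if_neg (by omega)]
        have : j - p = i := by omega
        rw [this, hij]; congr 1; omega
      rw [← hm] at e1 e2
      rw [e1, e2]; exact hstep (j - 1)
    · have e1 : Y (m + 1) = u (j - (m+1)) := if_neg (by omega)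
      have e2 : Y m = u ((j - (m+1)) + 1) := by
        show (if m = p + 1 then _ else u (j - m)) = _
        rw [if_neg (by omega)]; congr 1; omega
      rw [e1, e2]; exact hstep _


def Good (ρ y : α) (l : List α) : Prop :=
  l ≠ [] ∧ l.head? = some y ∧ l.getLast? = some ρ ∧ (∀ z ∈ l, D.precN z x) ∧
    l.Chain' (fun a b => D.precN (D.tgt a) b)

lemma good_exists (hx : 2 ≤ D.dim x) {ρ : α}
    (hρ : D.precN ρ x ∧ D.tgt ρ = D.tgt (D.tgt x)) :
    ∀ (k : ℕ) (y : α), D.precN y x → D.tgt ((nxt D x)^[k] y) = D.tgt (D.tgt x) →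
      ∃ l, Good D x ρ y l := by
  intro k
  induction k with
  | zero =>
    intro y hy h
    have : y = ρ := root_unique D x hx ⟨hy, h⟩ hρ
    exact ⟨[y], by simp, by simp, by simp [this], by simpa using hy, List.isChain_singleton y⟩
  | succ k ih =>
    intro y hy h
    by_cases hr : D.tgt y = D.tgt (D.tgt x)
    · have : y = ρ := root_unique D x hx ⟨hy, hr⟩ hρ
      exact ⟨[y], by simp, by simp, by simp [this], by simpa using hy, List.isChain_singleton y⟩
    · have hex : ∃ z, D.precN z x ∧ D.precN (D.tgt y) z :=
        (step D x hx hy).resolve_left hr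
      obtain ⟨hz, hyz⟩ := nxt_spec D x hex
      obtain ⟨l, hl0, hl1, hl2, hl3, hl4⟩ :=
        ih (nxt D x y) hz (by rwa [← Function.iterate_succ_apply])
      refine ⟨y :: l, by simp, by simp, ?_, ?_, ?_⟩
      · rcases l with _ | ⟨a, t⟩
        · exact absurd rfl hl0
        · rwa [List.getLast?_cons_cons]
      · intro z hzm
        rcases List.mem_cons.1 hzm with h | h
        · exact h ▸ hy
        · exact hl3 z h
      · exact List.isChain_cons.2
          ⟨fun b hb => by rw [hl1] at hb; exact (Option.some_inj.1 hb) ▸ hyz, hl4⟩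

lemma good_cases {ρ y : α} {l : List α} (hl : Good D x ρ y l) :
    (l = [y] ∧ y = ρ) ∨
    (∃ z t, l = y :: z :: t ∧ D.precN (D.tgt y) z ∧ D.precN z x ∧ Good D x ρ z (z :: t)) := by
  obtain ⟨hl0, hl1, hl2, hl3, hl4⟩ := hl
  rcases l with _ | ⟨a, t⟩
  · exact absurd rfl hl0
  have ha : a = y := by simpa using hl1
  subst ha
  rcases t with _ | ⟨z, t'⟩
  · left
    refine ⟨rfl, ?_⟩
    simpa using hl2
  · right
    exact ⟨z, t', rfl, (List.isChain_cons_cons.1 hl4).1, hl3 z (by simp), by simp, by simp,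
      by rwa [List.getLast?_cons_cons] at hl2, fun w hw => hl3 w (List.mem_cons_of_mem _ hw),
      (List.isChain_cons_cons.1 hl4).2⟩

lemma good_unique (hx : 2 ≤ D.dim x) {ρ : α}
    (hρ : D.precN ρ x ∧ D.tgt ρ = D.tgt (D.tgt x)) :
    ∀ (l l' : List α) (y : α), Good D x ρ y l → Good D x ρ y l' → l = l' := by
  intro l
  induction l with
  | nil => intro l' y hl _; exact absurd rfl hl.1
  | cons a t ih =>
    intro l' y hl hl'
    rcases good_cases D x hl with ⟨he, hyρ⟩ | ⟨z, t1, he, hsz, hz, hg⟩ <;>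
      rcases good_cases D x hl' with ⟨he', hyρ'⟩ | ⟨z', t1', he', hsz', hz', hg'⟩
    · rw [he, he']
    · subst hyρ
      exact absurd (root_no_succ D x hx hρ.1 hρ.2 hz' hsz') id
    · subst hyρ'
      exact absurd (root_no_succ D x hx hρ.1 hρ.2 hz hsz) id
    · have hy : D.precN y x := hl.2.2.2.1 y (by rw [he]; simp)
      have hzz : z = z' := succ_unique D x hx hy hz hz' hsz hsz'
      subst hzz
      obtain ⟨ha, ht⟩ : a = y ∧ t = z :: t1 := by injection he with h1 h2; exact ⟨h1, h2⟩
      subst ha; subst ht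
      rw [he']
      congr 1
      exact ih (z :: t1') z hg hg'

end DFCAux


/-- In a DFC, for `x` with `dim x ≥ 2`: (a) there is a unique `ρ ∈ δ(x)`
with `γ(ρ) = γ(γ(x))`; (b) for every `y ∈ δ(x)` there is a unique finite sequence
`y = y₁, …, y_p = ρ` (`p ≥ 1`) of elements of `δ(x)` with `γ(yᵢ) ∈ δ(y_{i+1})`,
so `δ(x)` is a rooted tree with root `ρ`. -/
theorem dfc_tree_structure {α : Type*} [Fintype α] (D : DFC α) (x : α)
    (hx : 2 ≤ D.dim x) :
    (∃! ρ, D.precN ρ x ∧ D.tgt ρ = D.tgt (D.tgt x)) ∧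
    (∀ ρ, (D.precN ρ x ∧ D.tgt ρ = D.tgt (D.tgt x)) →
      ∀ y, D.precN y x →
        ∃! l : List α, l ≠ [] ∧ l.head? = some y ∧ l.getLast? = some ρ ∧
          (∀ z ∈ l, D.precN z x) ∧
          l.Chain' (fun a b => D.precN (D.tgt a) b)) := by
  constructor
  · obtain ⟨y, hy⟩ := D.src_exists x (by omega)
    obtain ⟨k, hk⟩ := DFCAux.reach_root D x hx hy
    exact ⟨_, ⟨DFCAux.orbit_mem D x hx hy k, hk⟩,
      fun ρ' h' => DFCAux.root_unique D x hx h' ⟨DFCAux.orbit_mem D x hx hy k, hk⟩⟩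
  · intro ρ hρ y hy
    obtain ⟨k, hk⟩ := DFCAux.reach_root D x hx hy
    obtain ⟨l, hl⟩ := DFCAux.good_exists D x hx hρ k y hy hk
    refine ⟨l, hl, fun l' hl' => DFCAux.good_unique D x hx hρ l' l y hl' hl⟩
end

section
/- Let C be a dendritic face complex and let a ∈ C with dim(a) ≥ 2. Then {γ(γ(a))} = {γ(b) : b ∈ δ(a)} \ (⋃_{b ∈ δ(a)} δ(b)) and δ(γ(a)) = (⋃_{b ∈ δ(a)} δ(b)) \ {γ(b) : b ∈ δ(a)} (the globularity equations γγ = γδ − δδ and δγ = δδ − γδ). -/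
/-- globularity: `γγ = γδ − δδ` and `δγ = δδ − γδ`. -/
theorem dfc_globularity {α : Type*} [Fintype α] (D : DFC α) (a : α)
    (ha : 2 ≤ D.dim a) :
    ({D.tgt (D.tgt a)} : Set α) =
      {y | ∃ b, D.precN b a ∧ y = D.tgt b} \ {y | ∃ b, D.precN b a ∧ D.precN y b} ∧
    {y | D.precN y (D.tgt a)} =
      {y | ∃ b, D.precN b a ∧ D.precN y b} \ {y | ∃ b, D.precN b a ∧ y = D.tgt b} := by
  have hsT : ∀ u v : α, sprec D.precN D.precP true u v = D.precP u v := fun _ _ => rfl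
  have hsF : ∀ u v : α, sprec D.precN D.precP false u v = D.precN u v := fun _ _ => rfl
  have hdim1 : 1 ≤ D.dim a := by omega
  have hga : D.precP (D.tgt a) a := D.tgt_precP a hdim1
  have hdimg : D.dim a = D.dim (D.tgt a) + 1 := D.dim_precP hga
  have hgg : D.precP (D.tgt (D.tgt a)) (D.tgt a) := D.tgt_precP _ (by omega)
  set g := D.tgt a with hgdef
  set z0 := D.tgt g with hz0def
  -- Step A: z0 is the target of some source of a, and it is the unique
  -- element of δ(a) whose target is z0.
  obtain ⟨c, ⟨hcne, a', b', hzb, hya, hiff⟩, hcu⟩ := D.thin true true a g z0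
    ((hsT _ _).symm ▸ hgg) ((hsT _ _).symm ▸ hga)
  have hdiff : a' ≠ b' := hiff.mp rfl
  have ha' : a' = false := by
    cases a' with
    | true => exact absurd (D.precP_unique ((hsT _ _) ▸ hya)) hcne
    | false => rfl
  have hb' : b' = true := by
    cases b' with
    | true => rfl
    | false => exact absurd (ha' ▸ rfl) hdiff
  rw [ha', hsF] at hya
  rw [hb', hsT] at hzb
  -- hya : D.precN c a, hzb : D.precP z0 c
  -- Step B: z0 is a source of no source of a.
  have stepB : ¬ ∃ b, D.precN b a ∧ D.precN z0 b := by
    rintro ⟨b, hba, hzb0⟩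
    have hbc : b ≠ c := fun h => D.not_both z0 b ⟨hzb0, h ▸ hzb⟩
    obtain ⟨y', _, huniq⟩ := D.thin false true a c z0
      ((hsT _ _).symm ▸ hzb) ((hsF _ _).symm ▸ hya)
    have hgc : g ≠ c := fun h => D.not_both g a ⟨h ▸ hya, hga⟩
    have h1 : g = y' := huniq g ⟨hgc, true, true, (hsT _ _).symm ▸ hgg,
      (hsT _ _).symm ▸ hga, by simp⟩
    have h2 : b = y' := huniq b ⟨hbc, false, false, (hsF _ _).symm ▸ hzb0,
      (hsF _ _).symm ▸ hba, by simp⟩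
    exact D.not_both g a ⟨(h1.trans h2.symm) ▸ hba, hga⟩
  -- Step C: a source of a whose target is in no δ(b) has target z0.
  have stepC : ∀ b, D.precN b a → (∀ b', D.precN b' a → ¬ D.precN (D.tgt b) b') →
      D.tgt b = z0 := by
    intro b hba hnot
    have hdb : D.dim a = D.dim b + 1 := D.dim_precN hba
    have htb : D.precP (D.tgt b) b := D.tgt_precP b (by omega)
    obtain ⟨y', ⟨hne, a', b', hzy, hyx, hiff'⟩, _⟩ := D.thin false true a b (D.tgt b)
      ((hsT _ _).symm ▸ htb) ((hsF _ _).symm ▸ hba)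
    have hsame : a' = b' := by
      by_contra h
      simpa using hiff'.mpr h
    cases a' with
    | true =>
      rw [hsT] at hyx
      rw [← hsame, hsT] at hzy
      have : y' = g := D.precP_unique hyx
      rw [this] at hzy
      exact D.precP_unique hzy
    | false =>
      rw [hsF] at hyx
      rw [← hsame, hsF] at hzy
      exact absurd hzy (hnot y' hyx)
  -- Step D: a source of g is a source of some source of a.
  have stepD : ∀ z, D.precN z g → ∃ y', y' ≠ g ∧ D.precN y' a ∧ D.precN z y' := by
    intro z hzg
    obtain ⟨y', ⟨hne, a', b', hzy, hyx, hiff'⟩, _⟩ := D.thin true false a g z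
      ((hsF _ _).symm ▸ hzg) ((hsT _ _).symm ▸ hga)
    have hsame : a' = b' := by
      by_contra h
      simpa using hiff'.mpr h
    cases a' with
    | true =>
      rw [hsT] at hyx
      exact absurd (D.precP_unique hyx) hne
    | false =>
      rw [hsF] at hyx
      rw [← hsame, hsF] at hzy
      exact ⟨y', hne, hyx, hzy⟩
  -- Step E: a source of g is the target of no source of a.
  have stepE : ∀ z, D.precN z g → ∀ c', D.precN c' a → z ≠ D.tgt c' := by
    intro z hzg c' hc'a hzc'
    have hdc' : D.dim a = D.dim c' + 1 := D.dim_precN hc'a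
    have htc' : D.precP z c' := by
      rw [hzc']; exact D.tgt_precP c' (by omega)
    obtain ⟨y0, hy0g, hy0a, hzy0⟩ := stepD z hzg
    have hy0c' : y0 ≠ c' := fun h => D.not_both z y0 ⟨hzy0, h ▸ htc'⟩
    obtain ⟨y', _, huniq⟩ := D.thin false false a y0 z
      ((hsF _ _).symm ▸ hzy0) ((hsF _ _).symm ▸ hy0a)
    have h1 : g = y' := huniq g ⟨Ne.symm hy0g, true, false, (hsF _ _).symm ▸ hzg,
      (hsT _ _).symm ▸ hga, by simp⟩
    have h2 : c' = y' := huniq c' ⟨Ne.symm hy0c', false, true, (hsT _ _).symm ▸ htc',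
      (hsF _ _).symm ▸ hc'a, by simp⟩
    exact D.not_both g a ⟨(h1.trans h2.symm) ▸ hc'a, hga⟩
  -- Step F: an element of δδ(a) that is the target of no source of a is a source of g.
  have stepF : ∀ z b, D.precN b a → D.precN z b →
      (∀ c', D.precN c' a → z ≠ D.tgt c') → D.precN z g := by
    intro z b hba hzb' hnot
    obtain ⟨y', ⟨hne, a', b', hzy, hyx, hiff'⟩, _⟩ := D.thin false false a b z
      ((hsF _ _).symm ▸ hzb') ((hsF _ _).symm ▸ hba)
    have hdiff' : a' ≠ b' := hiff'.mp rfl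
    cases a' with
    | true =>
      rw [hsT] at hyx
      have hb'f : b' = false := by
        cases b' with
        | true => exact absurd rfl hdiff'
        | false => rfl
      rw [hb'f, hsF] at hzy
      rw [D.precP_unique hyx] at hzy
      exact hzy
    | false =>
      rw [hsF] at hyx
      have hb't : b' = true := by
        cases b' with
        | true => rfl
        | false => exact absurd rfl hdiff'
      rw [hb't, hsT] at hzy
      exact absurd (D.precP_unique hzy) (hnot y' hyx)
  constructor
  · ext y
    simp only [Set.mem_singleton_iff, Set.mem_diff, Set.mem_setOf_eq]
    constructor
    · rintro rfl
      exact ⟨⟨c, hya, D.precP_unique hzb⟩, stepB⟩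
    · rintro ⟨⟨b, hba, rfl⟩, hnot⟩
      push_neg at hnot
      exact stepC b hba hnot
  · ext z
    simp only [Set.mem_diff, Set.mem_setOf_eq]
    constructor
    · intro hz
      refine ⟨?_, ?_⟩
      · obtain ⟨y', _, hy'a, hzy'⟩ := stepD z hz
        exact ⟨y', hy'a, hzy'⟩
      · rintro ⟨c', hc'a, hzc'⟩
        exact stepE z hz c' hc'a hzc'
    · rintro ⟨⟨b, hba, hzb'⟩, hnot⟩
      push_neg at hnot
      exact stepF z b hba hzb' hnot
end

section
/- Let C be a dendritic face complex and let d ∈ C_k be a source, i.e. there exists some c with d ≺⁻ c. Then there is a unique c ∈ Λ_{k+1} with d ≺⁻ c. -/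
section DFCProofAux

namespace DFCProofAux

variable {α : Type*} [Fintype α]

/-- one-step face relation -/
abbrev Rel (D : DFC α) : α → α → Prop := fun a b => D.precN a b ∨ D.precP a b

/-- the face order -/
abbrev Dle (D : DFC α) : α → α → Prop := Relation.ReflTransGen (Rel D)

variable (D : DFC α)

set_option linter.unusedSectionVars false

lemma dim_rel {a b : α} (h : Rel D a b) : D.dim b = D.dim a + 1 := by
  cases h with
  | inl h => exact D.dim_precN h
  | inr h => exact D.dim_precP h

lemma dim_le_of_dle {a b : α} (h : Dle D a b) : D.dim a ≤ D.dim b := by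
  induction h with
  | refl => exact le_rfl
  | tail _ hstep ih => have := dim_rel D hstep; omega

lemma eq_of_dle_dim {a b : α} (h : Dle D a b) (hd : D.dim b ≤ D.dim a) : a = b := by
  rcases Relation.ReflTransGen.cases_tail h with h' | ⟨c, h1, h2⟩
  · exact h'.symm
  · exfalso; have := dim_le_of_dle D h1; have := dim_rel D h2; omega

lemma facet_decomp {a b : α} (h : Dle D a b) (hne : a ≠ b) :
    ∃ f, Dle D a f ∧ Rel D f b := by
  rcases Relation.ReflTransGen.cases_tail h with h' | ⟨c, h1, h2⟩
  · exact absurd h'.symm hne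
  · exact ⟨c, h1, h2⟩

lemma step_of_dle {a b : α} (h : Dle D a b) (hd : D.dim b = D.dim a + 1) : Rel D a b := by
  rcases Relation.ReflTransGen.cases_tail h with h' | ⟨c, h1, h2⟩
  · exfalso; rw [h'] at hd; omega
  · have hc : a = c := by
      have := dim_rel D h2
      exact eq_of_dle_dim D h1 (by omega)
    rwa [hc]

/-! ### Diamond lemmas from oriented thinness -/

lemma dia_np {e c x : α} (h1 : D.precN e c) (h2 : D.precP c x) :
    ∃ q, q ≠ c ∧ D.precN e q ∧ D.precN q x := by
  obtain ⟨q, ⟨hne, a', b', hb', ha', hcond⟩, -⟩ :=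
    D.thin true false x c e (by simpa [sprec] using h1) (by simpa [sprec] using h2)
  cases a' <;> cases b' <;> simp only [sprec] at hb' ha' hcond
  · exact ⟨q, hne, hb', ha'⟩
  · simp at hcond
  · simp at hcond
  · exfalso
    have e1 := D.precP_unique ha'
    have e2 := D.precP_unique h2
    exact hne (by rw [e1, e2])

lemma dia_nn {e c x : α} (h1 : D.precN e c) (h2 : D.precN c x) :
    ∃ q, q ≠ c ∧ ((D.precN e q ∧ D.precP q x) ∨ (D.precP e q ∧ D.precN q x)) := by
  obtain ⟨q, ⟨hne, a', b', hb', ha', hcond⟩, -⟩ :=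
    D.thin false false x c e (by simpa [sprec] using h1) (by simpa [sprec] using h2)
  cases a' <;> cases b' <;> simp only [sprec] at hb' ha' hcond
  · simp at hcond
  · exact ⟨q, hne, Or.inr ⟨hb', ha'⟩⟩
  · exact ⟨q, hne, Or.inl ⟨hb', ha'⟩⟩
  · simp at hcond

lemma dia_pn {e c x : α} (h1 : D.precP e c) (h2 : D.precN c x) :
    ∃ q, q ≠ c ∧ ((D.precN e q ∧ D.precN q x) ∨ (D.precP e q ∧ D.precP q x)) := by
  obtain ⟨q, ⟨hne, a', b', hb', ha', hcond⟩, -⟩ :=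
    D.thin false true x c e (by simpa [sprec] using h1) (by simpa [sprec] using h2)
  cases a' <;> cases b' <;> simp only [sprec] at hb' ha' hcond
  · exact ⟨q, hne, Or.inl ⟨hb', ha'⟩⟩
  · simp at hcond
  · simp at hcond
  · exact ⟨q, hne, Or.inr ⟨hb', ha'⟩⟩

lemma dia_pp {e c x : α} (h1 : D.precP e c) (h2 : D.precP c x) :
    ∃ q, q ≠ c ∧ D.precP e q ∧ D.precN q x := by
  obtain ⟨q, ⟨hne, a', b', hb', ha', hcond⟩, -⟩ :=
    D.thin true true x c e (by simpa [sprec] using h1) (by simpa [sprec] using h2)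
  cases a' <;> cases b' <;> simp only [sprec] at hb' ha' hcond
  · simp at hcond
  · exact ⟨q, hne, hb', ha'⟩
  · exfalso
    have e1 := D.precP_unique ha'
    have e2 := D.precP_unique h2
    exact hne (by rw [e1, e2])
  · simp at hcond

/-! ### The child relation on sources of `x` and its well-foundedness -/

def childR (D : DFC α) (x : α) : α → α → Prop :=
  fun a b => D.precN a x ∧ D.precN b x ∧ D.precN (D.tgt a) b

lemma transGen_chain {r : α → α → Prop} {a b : α} (h : Relation.TransGen r a b) :
    ∃ p : ℕ, ∃ f : ℕ → α, f 0 = a ∧ f (p + 1) = b ∧ ∀ i ≤ p, r (f i) (f (i + 1)) := by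
  induction h with
  | @single b h =>
    refine ⟨0, fun i => if i = 0 then a else b, by simp, by simp, ?_⟩
    intro i hi
    have : i = 0 := by omega
    subst this
    simpa using h
  | @tail b c hab hbc ih =>
    obtain ⟨p, f, h0, hp, hstep⟩ := ih
    refine ⟨p + 1, fun i => if i = p + 2 then c else f i, ?_, ?_, ?_⟩
    · simpa [show ¬(0 = p + 2) by omega] using h0
    · simp
    · intro i hi
      rcases Nat.lt_or_ge i (p + 1) with h' | h'
      · simpa [show ¬(i = p + 2) by omega, show ¬(i = p + 1) by omega] using
          hstep i (by omega)
      · have e : i = p + 1 := by omega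
        subst e
        simpa [hp, show ¬(p + 1 = p + 2) by omega] using hbc

lemma childR_acyclic (x a : α) : ¬ Relation.TransGen (childR D x) a a := by
  intro h
  obtain ⟨p, f, h0, hp, hstep⟩ := transGen_chain h
  have hsrc : ∀ i, 1 ≤ i → i ≤ p + 1 → D.precN (f (p + 2 - i)) x := by
    intro i hi1 hi2
    have e : p + 2 - i = (p + 1 - i) + 1 := by omega
    rw [e]
    exact (hstep (p + 1 - i) (by omega)).2.1
  have hwrap : f (p + 2 - (p + 1 + 1)) = f (p + 2 - 1) := by
    rw [show p + 2 - (p + 1 + 1) = 0 by omega, show p + 2 - 1 = p + 1 by omega, h0, hp]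
  have htgt : ∀ i, 1 ≤ i → i ≤ p + 1 →
      D.precN (D.tgt (f (p + 2 - (i + 1)))) (f (p + 2 - i)) := by
    intro i hi1 hi2
    have e : p + 2 - i = (p + 2 - (i + 1)) + 1 := by omega
    rw [e]
    exact (hstep (p + 2 - (i + 1)) (by omega)).2.2
  exact D.no_cycle x (p + 1) (by omega) (fun i => f (p + 2 - i)) hsrc hwrap htgt

lemma childR_wf (x : α) : WellFounded (childR D x) := by
  have hirr : IsIrrefl α (Relation.TransGen (childR D x)) := ⟨fun a => childR_acyclic D x a⟩
  have htr : IsTrans α (Relation.TransGen (childR D x)) := ⟨fun _ _ _ h1 h2 => h1.trans h2⟩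
  exact Subrelation.wf (fun h => Relation.TransGen.single h)
    (Finite.wellFounded_of_trans_of_irrefl _)

set_option linter.unusedSectionVars false

/-! ### The edge lemma: everything strictly below the target of a node of `x`
lies below `tgt x`. -/

lemma el (x : α) (w : α) : D.precN w x → 2 ≤ D.dim w →
    ∀ z, Dle D z (D.tgt w) → z ≠ D.tgt w → Dle D z (D.tgt x) := by
  refine (childR_wf D x).induction
    (C := fun w => D.precN w x → 2 ≤ D.dim w →
      ∀ z, Dle D z (D.tgt w) → z ≠ D.tgt w → Dle D z (D.tgt x)) w ?_
  clear w
  intro w ih hwx hdw z hz hzne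
  have hgw : D.precP (D.tgt w) w := D.tgt_precP w (by omega)
  have hdg : D.dim w = D.dim (D.tgt w) + 1 := D.dim_precP hgw
  obtain ⟨u, hzu, hu⟩ := facet_decomp D hz hzne
  have hdu : D.dim (D.tgt w) = D.dim u + 1 := dim_rel D hu
  cases hu with
  | inr hug =>
    -- u = tgt (tgt w); use dia_pp to get the "root" ρ of tree(w)
    have h1g : 1 ≤ D.dim (D.tgt w) := by omega
    have hgg : D.precP (D.tgt (D.tgt w)) (D.tgt w) := D.tgt_precP _ h1g
    obtain ⟨ρ, hρne, hρ1, hρ2⟩ := dia_pp D hgg hgw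
    have hdρ : D.dim w = D.dim ρ + 1 := D.dim_precN hρ2
    have hu' : u = D.tgt (D.tgt w) := D.precP_unique hug
    have hzρ : Dle D z ρ := hzu.trans (Relation.ReflTransGen.single (Or.inr (hu' ▸ hρ1)))
    obtain ⟨q, hqne, hq⟩ := dia_nn D hρ2 hwx
    rcases hq with ⟨h1, h2⟩ | ⟨h1, h2⟩
    · exact hzρ.trans (Relation.ReflTransGen.single (Or.inl ((D.precP_unique h2) ▸ h1)))
    · -- recurse into the child q
      have hρq : ρ = D.tgt q := D.precP_unique h1
      have hdq : D.dim x = D.dim q + 1 := D.dim_precN h2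
      have hdx : D.dim x = D.dim w + 1 := D.dim_precN hwx
      refine ih q ⟨h2, hwx, hρq ▸ hρ2⟩ h2 (by omega) z (hρq ▸ hzρ) ?_
      · intro hzeq
        have hdz := dim_le_of_dle D hzu
        rw [← hρq] at hzeq
        subst hzeq
        omega
  | inl hun =>
    -- u ∈ δ(tgt w); use dia_np to get the node ν of tree(w) attached at u
    obtain ⟨ν, hνne, hν1, hν2⟩ := dia_np D hun hgw
    have hdν : D.dim w = D.dim ν + 1 := D.dim_precN hν2
    obtain ⟨q, hqne, hq⟩ := dia_nn D hν2 hwx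
    rcases hq with ⟨h1, h2⟩ | ⟨h1, h2⟩
    · exact (hzu.trans (Relation.ReflTransGen.single (Or.inl hν1))).trans
        (Relation.ReflTransGen.single (Or.inl ((D.precP_unique h2) ▸ h1)))
    · have hνq : ν = D.tgt q := D.precP_unique h1
      have hdq : D.dim x = D.dim q + 1 := D.dim_precN h2
      have hdx : D.dim x = D.dim w + 1 := D.dim_precN hwx
      refine ih q ⟨h2, hwx, hνq ▸ hν2⟩ h2 (by omega) z
        (hνq ▸ (hzu.trans (Relation.ReflTransGen.single (Or.inl hν1)))) ?_
      · intro hzeq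
        have hdz := dim_le_of_dle D hzu
        rw [← hνq] at hzeq
        subst hzeq
        omega

/-! ### SPINE: every face of codimension `≥ 3` lies below the target. -/

lemma spine' : ∀ m : ℕ, ∀ x : α, D.dim x = m → ∀ z, Dle D z x → D.dim z + 3 ≤ m →
    Dle D z (D.tgt x) := by
  intro m
  induction m using Nat.strong_induction_on with
  | _ m ih =>
  intro x hx z hzx hdz
  have hzne : z ≠ x := fun h => by subst h; omega
  obtain ⟨f, hzf, hfx⟩ := facet_decomp D hzx hzne
  have hdf : m = D.dim f + 1 := hx ▸ dim_rel D hfx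
  cases hfx with
  | inr h => exact (D.precP_unique h) ▸ hzf
  | inl hfN =>
    by_cases hc : D.dim z + 3 ≤ D.dim f
    · have hIH := ih (D.dim f) (by omega) f rfl z hzf hc
      have hdtf : D.dim f = D.dim (D.tgt f) + 1 := D.dim_precP (D.tgt_precP f (by omega))
      exact el D x f hfN (by omega) z hIH (fun h => by rw [h] at hdz; omega)
    · have hd2 : D.dim f = D.dim z + 2 := by omega
      have hzfne : z ≠ f := fun h => by subst h; omega
      obtain ⟨u, hzu, huf⟩ := facet_decomp D hzf hzfne
      have hdu : D.dim f = D.dim u + 1 := dim_rel D huf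
      have hzune : z ≠ u := fun h => by subst h; omega
      cases huf with
      | inr h =>
        have hu' : u = D.tgt f := D.precP_unique h
        exact el D x f hfN (by omega) z (hu' ▸ hzu) (hu' ▸ hzune)
      | inl huN =>
        obtain ⟨q, hqne, hq⟩ := dia_nn D huN hfN
        rcases hq with ⟨h1, h2⟩ | ⟨h1, h2⟩
        · exact hzu.trans (Relation.ReflTransGen.single (Or.inl ((D.precP_unique h2) ▸ h1)))
        · have huq : u = D.tgt q := D.precP_unique h1
          have hdq : D.dim q = D.dim u + 1 := D.dim_precP h1
          exact el D x q h2 (by omega) z (huq ▸ hzu) (huq ▸ hzune)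

lemma spine {x z : α} (hzx : Dle D z x) (hdz : D.dim z + 3 ≤ D.dim x) :
    Dle D z (D.tgt x) :=
  spine' D (D.dim x) x rfl z hzx hdz

/-! ### NOCOV: a codimension-3 face that is not covered inside `↓ tgt x`
is not covered inside `↓ x`. -/

lemma nocov (x c : α) (hd : D.dim c + 3 = D.dim x)
    (hγ : ∀ b, Dle D b (D.tgt x) → ¬ D.precP c b) :
    ∀ b, Dle D b x → ¬ D.precP c b := by
  have G : ∀ w, D.precN w x → ¬ D.precP c (D.tgt w) := by
    intro w
    refine (childR_wf D x).induction
      (C := fun w => D.precN w x → ¬ D.precP c (D.tgt w)) w ?_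
    clear w
    intro w ih hwx hc
    have hdw : D.dim x = D.dim w + 1 := D.dim_precN hwx
    have hgw : D.precP (D.tgt w) w := D.tgt_precP w (by omega)
    obtain ⟨ρ, hρne, hρ1, hρ2⟩ := dia_pp D hc hgw
    obtain ⟨q, hqne, hq⟩ := dia_nn D hρ2 hwx
    rcases hq with ⟨h1, h2⟩ | ⟨h1, h2⟩
    · exact hγ ρ (Relation.ReflTransGen.single (Or.inl ((D.precP_unique h2) ▸ h1))) hρ1
    · exact ih q ⟨h2, hwx, (D.precP_unique h1) ▸ hρ2⟩ h2 ((D.precP_unique h1) ▸ hρ1)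
  intro b hbx hcb
  have hdb : D.dim b = D.dim c + 1 := D.dim_precP hcb
  have hbne : b ≠ x := fun h => by subst h; omega
  obtain ⟨f, hbf, hfx⟩ := facet_decomp D hbx hbne
  have hdf : D.dim x = D.dim f + 1 := dim_rel D hfx
  cases hfx with
  | inr h => exact hγ b ((D.precP_unique h) ▸ hbf) hcb
  | inl hfN =>
    have hbfstep : Rel D b f := step_of_dle D hbf (by omega)
    cases hbfstep with
    | inr h => exact G f hfN ((D.precP_unique h) ▸ hcb)
    | inl hbN =>
      obtain ⟨q, hqne, hq⟩ := dia_nn D hbN hfN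
      rcases hq with ⟨h1, h2⟩ | ⟨h1, h2⟩
      · exact hγ b (Relation.ReflTransGen.single (Or.inl ((D.precP_unique h2) ▸ h1))) hcb
      · exact G q h2 ((D.precP_unique h1) ▸ hcb)

/-! ### The theorem at codimension 2. -/

lemma thm₂ {x e : α} (hd2 : D.dim x = D.dim e + 2)
    (hex : ∃ c, D.precN e c ∧ Dle D c x) :
    ∃! c, D.precN e c ∧ Dle D c x ∧ ∀ b, Dle D b x → ¬ D.precP c b := by
  obtain ⟨c₀, hec₀, hc₀x⟩ := hex
  have hdc₀ : D.dim c₀ = D.dim e + 1 := by have := D.dim_precN hec₀; omega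
  have hstep : Rel D c₀ x := step_of_dle D hc₀x (by omega)
  -- helper: any valid c' is a one-step face of x, negatively
  have hface : ∀ c', D.precN e c' → Dle D c' x →
      (∀ b, Dle D b x → ¬ D.precP c' b) → D.precN c' x := by
    intro c' he' hle' hunc'
    have hd' : D.dim c' = D.dim e + 1 := by have := D.dim_precN he'; omega
    have : Rel D c' x := step_of_dle D hle' (by omega)
    cases this with
    | inr h' => exact absurd h' (hunc' x Relation.ReflTransGen.refl)
    | inl h' => exact h'
  cases hstep with
  | inr hP =>
    -- c₀ = tgt x; its diamond partner is the champion
    obtain ⟨c₁, hne, he1, h1x⟩ := dia_np D hec₀ hP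
    refine ⟨c₁, ⟨he1, Relation.ReflTransGen.single (Or.inl h1x), ?_⟩, ?_⟩
    · rintro b hb hPb
      have hdb : D.dim b = D.dim x := by
        have := D.dim_precP hPb
        have := D.dim_precN h1x
        omega
      have hbx : b = x := eq_of_dle_dim D hb (by omega)
      subst hbx
      exact hne (by rw [D.precP_unique hPb, D.precP_unique hP])
    · rintro c' ⟨he', hle', hunc'⟩
      have h' := hface c' he' hle' hunc'
      have hm := D.thin true false x c₀ e (by simpa [sprec] using hec₀)
        (by simpa [sprec] using hP)
      refine hm.unique ⟨?_, false, false, by simpa [sprec] using he',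
        by simpa [sprec] using h', by simp⟩ ⟨hne, false, false, by simpa [sprec] using he1,
        by simpa [sprec] using h1x, by simp⟩
      · intro hcc
        exact D.not_both c' x ⟨h', hcc ▸ hP⟩
  | inl hN =>
    obtain ⟨q, hqne, hq⟩ := dia_nn D hec₀ hN
    have hunc₀ : ∀ b, Dle D b x → ¬ D.precP c₀ b := by
      rintro b hb hPb
      have hdb : D.dim b = D.dim x := by have := D.dim_precP hPb; omega
      have hbx : b = x := eq_of_dle_dim D hb (by omega)
      rw [hbx] at hPb
      exact D.not_both c₀ x ⟨hN, hPb⟩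
    refine ⟨c₀, ⟨hec₀, hc₀x, hunc₀⟩, ?_⟩
    rintro c' ⟨he', hle', hunc'⟩
    have h' := hface c' he' hle' hunc'
    rcases hq with ⟨h1, h2⟩ | ⟨h1, h2⟩
    · -- q : e ≺⁻ q ≺⁺ x (config 1)
      have hm := D.thin true false x q e (by simpa [sprec] using h1)
        (by simpa [sprec] using h2)
      refine hm.unique ⟨?_, false, false, by simpa [sprec] using he',
        by simpa [sprec] using h', by simp⟩
        ⟨?_, false, false, by simpa [sprec] using hec₀, by simpa [sprec] using hN, by simp⟩
      · intro hcc; exact D.not_both c' x ⟨h', hcc ▸ h2⟩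
      · intro hcc; exact D.not_both c₀ x ⟨hN, hcc ▸ h2⟩
    · -- q : e ≺⁺ q ≺⁻ x (config 2)
      have hm := D.thin false true x q e (by simpa [sprec] using h1)
        (by simpa [sprec] using h2)
      refine hm.unique ⟨?_, false, false, by simpa [sprec] using he',
        by simpa [sprec] using h', by simp⟩
        ⟨?_, false, false, by simpa [sprec] using hec₀, by simpa [sprec] using hN, by simp⟩
      · intro hcc; exact D.not_both e q ⟨hcc ▸ he', h1⟩
      · intro hcc; exact D.not_both e q ⟨hcc ▸ hec₀, h1⟩

/-! ### Funnel at codimension 3: some coface of `e` lies below `tgt x`. -/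

lemma funnel₃ {x e : α} (hd3 : D.dim x = D.dim e + 3)
    (hex : ∃ c, D.precN e c ∧ Dle D c x) :
    ∃ c, D.precN e c ∧ Dle D c (D.tgt x) := by
  have g₂ : ∀ v, D.precN v x → D.precN e (D.tgt v) →
      ∃ c, D.precN e c ∧ Dle D c (D.tgt x) := by
    intro v
    refine (childR_wf D x).induction
      (C := fun v => D.precN v x → D.precN e (D.tgt v) →
        ∃ c, D.precN e c ∧ Dle D c (D.tgt x)) v ?_
    clear v
    intro v ih hvx hev
    have hdv : D.dim x = D.dim v + 1 := D.dim_precN hvx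
    obtain ⟨c₁, hc₁ne, hec₁, hc₁v⟩ := dia_np D hev (D.tgt_precP v (by omega))
    obtain ⟨q, hqne, hq⟩ := dia_nn D hc₁v hvx
    rcases hq with ⟨h1, h2⟩ | ⟨h1, h2⟩
    · exact ⟨c₁, hec₁, Relation.ReflTransGen.single (Or.inl ((D.precP_unique h2) ▸ h1))⟩
    · exact ih q ⟨h2, hvx, (D.precP_unique h1) ▸ hc₁v⟩ h2 ((D.precP_unique h1) ▸ hec₁)
  obtain ⟨c₀, hec₀, hc₀x⟩ := hex
  have hdc₀ : D.dim c₀ = D.dim e + 1 := by have := D.dim_precN hec₀; omega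
  have hc₀ne : c₀ ≠ x := fun h => by subst h; omega
  obtain ⟨f, hc₀f, hfx⟩ := facet_decomp D hc₀x hc₀ne
  have hdf : D.dim x = D.dim f + 1 := dim_rel D hfx
  cases hfx with
  | inr h => exact ⟨c₀, hec₀, (D.precP_unique h) ▸ hc₀f⟩
  | inl hfN =>
    have hc₀step : Rel D c₀ f := step_of_dle D hc₀f (by omega)
    cases hc₀step with
    | inr h => exact g₂ f hfN ((D.precP_unique h) ▸ hec₀)
    | inl hc₀N =>
      obtain ⟨q, hqne, hq⟩ := dia_nn D hc₀N hfN
      rcases hq with ⟨h1, h2⟩ | ⟨h1, h2⟩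
      · exact ⟨c₀, hec₀, Relation.ReflTransGen.single (Or.inl ((D.precP_unique h2) ▸ h1))⟩
      · exact g₂ q h2 ((D.precP_unique h1) ▸ hec₀)

/-! ### The theorem at codimension 3. -/

lemma thm₃ {x e : α} (hd3 : D.dim x = D.dim e + 3)
    (hex : ∃ c, D.precN e c ∧ Dle D c x) :
    ∃! c, D.precN e c ∧ Dle D c x ∧ ∀ b, Dle D b x → ¬ D.precP c b := by
  have h1x : 1 ≤ D.dim x := by omega
  have hγx : D.precP (D.tgt x) x := D.tgt_precP x h1x
  have hdγ : D.dim x = D.dim (D.tgt x) + 1 := D.dim_precP hγx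
  have hγle : Dle D (D.tgt x) x := Relation.ReflTransGen.single (Or.inr hγx)
  obtain ⟨χ, ⟨heχ, hχγ, hχunc⟩, hχuniq⟩ := thm₂ D (x := D.tgt x) (e := e)
    (by omega) (funnel₃ D hd3 hex)
  have hdχ : D.dim χ = D.dim e + 1 := by have := D.dim_precN heχ; omega
  have hχN : D.precN χ (D.tgt x) := by
    have : Rel D χ (D.tgt x) := step_of_dle D hχγ (by omega)
    cases this with
    | inr h => exact absurd h (hχunc (D.tgt x) Relation.ReflTransGen.refl)
    | inl h => exact h
  refine ⟨χ, ⟨heχ, hχγ.trans hγle, ?_⟩, ?_⟩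
  · -- χ is uncovered in ↓x
    rintro b hbx hχb
    have hdb : D.dim b = D.dim e + 2 := by have := D.dim_precP hχb; omega
    have hbstep : Rel D b x := step_of_dle D hbx (by omega)
    cases hbstep with
    | inr h =>
      refine hχunc b ?_ hχb
      rw [D.precP_unique h]
    | inl hbN =>
      obtain ⟨ν, hνne, hν⟩ := dia_pn D hχb hbN
      rcases hν with ⟨hχν, hνx⟩ | ⟨hχν, hνx⟩
      · -- thin-uniqueness at (χ ≺⁻ ν ≺⁻ x) forces tgt x = b, contradiction
        have hm := D.thin false false x ν χ (by simpa [sprec] using hχν)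
          (by simpa [sprec] using hνx)
        have heq : D.tgt x = b := by
          refine hm.unique ⟨?_, true, false, by simpa [sprec] using hχN,
            by simpa [sprec] using hγx, by simp⟩
            ⟨?_, false, true, by simpa [sprec] using hχb, by simpa [sprec] using hbN,
              by simp⟩
          · intro hcc; exact D.not_both ν x ⟨hνx, hcc ▸ hγx⟩
          · intro hcc; exact D.not_both χ ν ⟨hχν, hcc ▸ hχb⟩
        exact D.not_both b x ⟨hbN, heq ▸ hγx⟩
      · have : ν = D.tgt x := D.precP_unique hνx
        exact D.not_both χ (D.tgt x) ⟨hχN, this ▸ hχν⟩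
  · -- uniqueness
    rintro c' ⟨he', hle', hunc'⟩
    have hdc' : D.dim c' = D.dim e + 1 := by have := D.dim_precN he'; omega
    have hne' : c' ≠ x := fun h => by subst h; omega
    obtain ⟨f, hc'f, hfx⟩ := facet_decomp D hle' hne'
    have hdf : D.dim x = D.dim f + 1 := dim_rel D hfx
    have hc'γ : Dle D c' (D.tgt x) := by
      cases hfx with
      | inr h => exact (D.precP_unique h) ▸ hc'f
      | inl hfN =>
        have hc'step : Rel D c' f := step_of_dle D hc'f (by omega)
        cases hc'step with
        | inr h =>
          exact absurd h (hunc' f (Relation.ReflTransGen.single (Or.inl hfN)))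
        | inl hc'N =>
          obtain ⟨q, hqne, hq⟩ := dia_nn D hc'N hfN
          rcases hq with ⟨h1, h2⟩ | ⟨h1, h2⟩
          · exact Relation.ReflTransGen.single (Or.inl ((D.precP_unique h2) ▸ h1))
          · exact absurd h1
              (hunc' q (Relation.ReflTransGen.single (Or.inl h2)))
    exact hχuniq c' ⟨he', hc'γ, fun b hb => hunc' b (hb.trans hγle)⟩

/-! ### The theorem at codimension ≥ 4 (reduction to `tgt x`). -/

lemma thm₄ {x e : α} (hd4 : D.dim e + 4 ≤ D.dim x)
    (hex : ∃ c, D.precN e c ∧ Dle D c x)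
    (hIH : (∃ c, D.precN e c ∧ Dle D c (D.tgt x)) →
      ∃! c, D.precN e c ∧ Dle D c (D.tgt x) ∧
        ∀ b, Dle D b (D.tgt x) → ¬ D.precP c b) :
    ∃! c, D.precN e c ∧ Dle D c x ∧ ∀ b, Dle D b x → ¬ D.precP c b := by
  obtain ⟨c₀, hec₀, hc₀x⟩ := hex
  have hdc₀ : D.dim c₀ = D.dim e + 1 := by have := D.dim_precN hec₀; omega
  have h1x : 1 ≤ D.dim x := by omega
  have hγx : D.precP (D.tgt x) x := D.tgt_precP x h1x
  have hγle : Dle D (D.tgt x) x := Relation.ReflTransGen.single (Or.inr hγx)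
  have hc₀γ : Dle D c₀ (D.tgt x) := spine D hc₀x (by omega)
  obtain ⟨χ, ⟨heχ, hχγ, hχunc⟩, hχuniq⟩ := hIH ⟨c₀, hec₀, hc₀γ⟩
  have hdχ : D.dim χ = D.dim e + 1 := by have := D.dim_precN heχ; omega
  refine ⟨χ, ⟨heχ, hχγ.trans hγle, ?_⟩, ?_⟩
  · rintro b hbx hχb
    have hdb : D.dim b = D.dim e + 2 := by have := D.dim_precP hχb; omega
    by_cases hcase : D.dim b + 3 ≤ D.dim x
    · exact hχunc b (spine D hbx hcase) hχb
    · have hd3 : D.dim χ + 3 = D.dim x := by omega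
      exact nocov D x χ hd3 (fun b' hb' => hχunc b' hb') b hbx hχb
  · rintro c' ⟨he', hle', hunc'⟩
    have hdc' : D.dim c' = D.dim e + 1 := by have := D.dim_precN he'; omega
    exact hχuniq c' ⟨he', spine D hle' (by omega),
      fun b hb => hunc' b (hb.trans hγle)⟩

/-! ### The master theorem, by strong induction on `dim x`. -/

lemma main' : ∀ m : ℕ, ∀ x : α, D.dim x = m → ∀ e, (∃ c, D.precN e c ∧ Dle D c x) →
    ∃! c, D.precN e c ∧ Dle D c x ∧ ∀ b, Dle D b x → ¬ D.precP c b := by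
  intro m
  induction m using Nat.strong_induction_on with
  | _ m ih =>
  intro x hx e hex
  obtain ⟨c₀, hec₀, hc₀x⟩ := hex
  have hdc₀ : D.dim c₀ = D.dim e + 1 := by have := D.dim_precN hec₀; omega
  have hle : D.dim e + 1 ≤ D.dim x := by have := dim_le_of_dle D hc₀x; omega
  by_cases h1 : D.dim x = D.dim e + 1
  · have hc₀ : c₀ = x := eq_of_dle_dim D hc₀x (by omega)
    subst hc₀
    refine ⟨c₀, ⟨hec₀, Relation.ReflTransGen.refl, ?_⟩, ?_⟩
    · rintro b hb hPb
      have := D.dim_precP hPb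
      have := dim_le_of_dle D hb
      omega
    · rintro c' ⟨he', hle', -⟩
      have hd' : D.dim c' = D.dim e + 1 := by have := D.dim_precN he'; omega
      exact eq_of_dle_dim D hle' (by omega)
  · by_cases h2 : D.dim x = D.dim e + 2
    · exact thm₂ D h2 ⟨c₀, hec₀, hc₀x⟩
    · by_cases h3 : D.dim x = D.dim e + 3
      · exact thm₃ D h3 ⟨c₀, hec₀, hc₀x⟩
      · have hd4 : D.dim e + 4 ≤ D.dim x := by omega
        have hdγ : D.dim x = D.dim (D.tgt x) + 1 :=
          D.dim_precP (D.tgt_precP x (by omega))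
        exact thm₄ D hd4 ⟨c₀, hec₀, hc₀x⟩
          (fun hex' => ih (D.dim (D.tgt x)) (by omega) (D.tgt x) rfl e hex')


end DFCProofAux

end DFCProofAux

/-- every source `d ∈ C_k` is the source of a unique `c ∈ Λ_{k+1}`. -/
theorem dfc_source_of_unique_lam {α : Type*} [Fintype α] (D : DFC α) (k : ℕ) (d : α)
    (hd : D.dim d = k) (h : ∃ c, D.precN d c) :
    ∃! c, D.lam (k + 1) c ∧ D.precN d c := by
  classical
  obtain ⟨c₀, hc₀⟩ := h
  have hle : ∀ z : α, DFCProofAux.Dle D z D.top := fun z => D.le_top z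
  obtain ⟨χ, ⟨h1, h2, h3⟩, huniq⟩ :=
    DFCProofAux.main' D (D.dim D.top) D.top rfl d ⟨c₀, hc₀, hle c₀⟩
  refine ⟨χ, ⟨⟨?_, ?_⟩, h1⟩, ?_⟩
  · have := D.dim_precN h1; omega
  · intro c' hPc'
    exact h3 c' (hle c') hPc'
  · rintro c'' ⟨⟨hdim, hnc⟩, hprec⟩
    exact huniq c'' ⟨hprec, hle c'', fun b _ hb => hnc b hb⟩
end

section
/- Let C be a dendritic face complex and let 0 ≤ k ≤ n−1. Then every e ∈ Λ_k is a source of the iterated target of ω at dimension k+1, i.e. e ≺⁻ γ^{(k+1)}ω. -/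
namespace DFC

variable {α : Type*} [Fintype α]

/-- The unsigned one-step face relation `≺`. -/
def stp (D : DFC α) (a b : α) : Prop := D.precN a b ∨ D.precP a b

lemma dim_stp (D : DFC α) {a b : α} (h : D.stp a b) : D.dim b = D.dim a + 1 :=
  h.elim D.dim_precN D.dim_precP

lemma dim_le_rtg (D : DFC α) {a b : α} (h : Relation.ReflTransGen D.stp a b) :
    D.dim a ≤ D.dim b := by
  induction h with
  | refl => exact le_refl _
  | tail _ h ih => rw [D.dim_stp h]; omega

lemma dim_lt_tg (D : DFC α) {a b : α} (h : Relation.TransGen D.stp a b) :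
    D.dim a < D.dim b := by
  induction h with
  | single h => rw [D.dim_stp h]; omega
  | tail _ h ih => rw [D.dim_stp h]; omega

lemma tgt_iter (D : DFC α) (j : ℕ) (w : α) (h : j ≤ D.dim w) :
    Relation.ReflTransGen D.stp (D.tgt^[j] w) w ∧ D.dim (D.tgt^[j] w) = D.dim w - j := by
  induction j with
  | zero => simpa using Relation.ReflTransGen.refl
  | succ j ih =>
    obtain ⟨h1, h2⟩ := ih (by omega)
    rw [Function.iterate_succ_apply']
    have hd : 1 ≤ D.dim (D.tgt^[j] w) := by omega
    have hp := D.tgt_precP _ hd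
    have hdd := D.dim_precP hp
    exact ⟨Relation.ReflTransGen.head (Or.inr hp) h1, by omega⟩

lemma main (D : DFC α) {k : ℕ} {e : α} (he : D.lam k e) (m : ℕ) :
    (∀ b c, D.dim b = m → D.precN c b → Relation.TransGen D.stp e c →
      Relation.TransGen D.stp e (D.tgt b)) ∧
    (∀ b, D.dim b = m → k + 1 ≤ m → Relation.TransGen D.stp e b →
      D.precN e (D.tgt^[m - (k+1)] b)) := by
  obtain ⟨hdim_e, hnt⟩ := he
  induction m using Nat.strong_induction_on with
  | _ m IH =>
    have hD : ∀ b c, D.dim b = m → D.precN c b → Relation.TransGen D.stp e c →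
        Relation.TransGen D.stp e (D.tgt b) := by
      intro b c hb hcb hec
      have hdcb := D.dim_precN hcb
      have hkc : k < D.dim c := by have := D.dim_lt_tg hec; omega
      have hm2 : k + 2 ≤ m := by omega
      have hL := (IH (m-1) (by omega)).2 c (by omega) (by omega) hec
      by_cases hmk : m = k + 2
      · have h0 : (m-1) - (k+1) = 0 := by omega
        rw [h0, Function.iterate_zero_apply] at hL
        obtain ⟨y', ⟨hy'ne, a', b', hzb, hya, hiff⟩, -⟩ :=
          D.thin false false b c e hL hcb
        have hab : ¬ (a' = b') := hiff.mp rfl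
        cases b' with
        | true => exact absurd hzb (hnt y')
        | false =>
          cases a' with
          | false => exact absurd rfl hab
          | true =>
            have hy't : y' = D.tgt b := D.precP_unique hya
            exact Relation.TransGen.single (Or.inl (hy't ▸ hzb))
      · have hj : (m-1) - (k+1) = ((m-1) - (k+1) - 1) + 1 := by omega
        rw [hj, Function.iterate_succ_apply] at hL
        have hdc1 : 1 ≤ D.dim c := by omega
        have hdtc : D.dim (D.tgt c) = m - 2 := by
          have := D.dim_precP (D.tgt_precP c hdc1); omega
        have hrt := (D.tgt_iter ((m-1) - (k+1) - 1) (D.tgt c) (by omega)).1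
        have hetc : Relation.TransGen D.stp e (D.tgt c) :=
          Relation.TransGen.head' (Or.inl hL) hrt
        by_contra hne
        have key : ∀ c', D.precN c' b → Relation.TransGen D.stp e (D.tgt c') →
            ∃ c'', D.precN c'' b ∧ D.precN (D.tgt c') c'' ∧
              Relation.TransGen D.stp e (D.tgt c'') := by
          intro c' hc'b hetc'
          have hd1 : 1 ≤ D.dim c' := by have := D.dim_precN hc'b; omega
          have hp := D.tgt_precP c' hd1
          obtain ⟨y', ⟨hy'ne, a', b', hzb, hya, hiff⟩, -⟩ :=
            D.thin false true b c' (D.tgt c') hp hc'b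
          have hab : a' = b' := by
            by_contra h; exact Bool.false_ne_true (hiff.mpr h)
          subst hab
          cases a' with
          | true =>
            have h1 : y' = D.tgt b := D.precP_unique hya
            exact absurd (h1 ▸ (hetc'.tail (Or.inr hzb))) hne
          | false =>
            refine ⟨y', hya, hzb, ?_⟩
            have hdy' : D.dim y' = m - 1 := by have := D.dim_precN hya; omega
            exact (IH (m-1) (by omega)).1 y' (D.tgt c') hdy' hzb hetc'
        obtain ⟨F, hF⟩ : ∃ F : {x : α // D.precN x b ∧ Relation.TransGen D.stp e (D.tgt x)} →
            {x : α // D.precN x b ∧ Relation.TransGen D.stp e (D.tgt x)},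
            ∀ p, D.precN (D.tgt p.1) (F p).1 :=
          ⟨fun p => ⟨(key p.1 p.2.1 p.2.2).choose,
            (key p.1 p.2.1 p.2.2).choose_spec.1, (key p.1 p.2.1 p.2.2).choose_spec.2.2⟩,
            fun p => (key p.1 p.2.1 p.2.2).choose_spec.2.1⟩
        set g : ℕ → {x : α // D.precN x b ∧ Relation.TransGen D.stp e (D.tgt x)} :=
          fun n => F^[n] ⟨c, hcb, hetc⟩ with hg
        have hglink : ∀ n, D.precN (D.tgt (g n).1) (g (n+1)).1 := by
          intro n
          have hstep : g (n+1) = F (g n) := Function.iterate_succ_apply' F n _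
          rw [hstep]; exact hF (g n)
        obtain ⟨i0, j0, hij0, heq0⟩ :=
          Finite.exists_ne_map_eq_of_infinite (fun n => (g n).1)
        obtain ⟨i, j, hij, heq⟩ : ∃ i j : ℕ, i < j ∧ (g i).1 = (g j).1 := by
          rcases lt_or_gt_of_ne hij0 with h | h
          · exact ⟨i0, j0, h, heq0⟩
          · exact ⟨j0, i0, h, heq0.symm⟩
        refine D.no_cycle b (j - i) (by omega) (fun l => (g (j + 1 - l)).1) ?_ ?_ ?_
        · intro l _ _; exact (g _).2.1
        · show (g (j + 1 - (j - i + 1))).1 = (g (j + 1 - 1)).1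
          have e1 : j + 1 - (j - i + 1) = i := by omega
          have e2 : j + 1 - 1 = j := by omega
          rw [e1, e2]; exact heq
        · intro l h1 h2
          show D.precN (D.tgt (g (j + 1 - (l + 1))).1) (g (j + 1 - l)).1
          have e1 : j + 1 - (l + 1) = j - l := by omega
          have e2 : j + 1 - l = j - l + 1 := by omega
          rw [e1, e2]; exact hglink (j - l)
    refine ⟨hD, ?_⟩
    intro b hb hkm heb
    obtain ⟨y, hey, hyb⟩ := (Relation.TransGen.tail'_iff).mp heb
    have hdy : D.dim b = D.dim y + 1 := D.dim_stp hyb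
    by_cases hmk : m = k + 1
    · have hey' : e = y := by
        rcases Relation.ReflTransGen.cases_head hey with h | ⟨c', hc', hrest⟩
        · exact h
        · exfalso
          have h3 := D.dim_le_rtg hrest
          have h4 := D.dim_stp hc'
          omega
      have h0 : m - (k+1) = 0 := by omega
      rw [h0, Function.iterate_zero_apply]
      cases hyb with
      | inl h => rw [← hey'] at h; exact h
      | inr h => rw [← hey'] at h; exact absurd h (hnt b)
    · have hm2 : k + 2 ≤ m := by omega
      have hey' : Relation.TransGen D.stp e y := by
        rcases Relation.ReflTransGen.cases_head hey with h | ⟨c', hc', hrest⟩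
        · exfalso; subst h; omega
        · exact Relation.TransGen.head' hc' hrest
      have hetb : Relation.TransGen D.stp e (D.tgt b) := by
        cases hyb with
        | inl h => exact hD b y hb h hey'
        | inr h => rwa [D.precP_unique h] at hey'
      have hdtb : D.dim (D.tgt b) = m - 1 := by
        have := D.dim_precP (D.tgt_precP b (by omega)); omega
      have hres := (IH (m-1) (by omega)).2 (D.tgt b) hdtb (by omega) hetb
      rw [show m - (k+1) = ((m-1) - (k+1)) + 1 from by omega,
        Function.iterate_succ_apply]
      exact hres

end DFC

/-- for `0 ≤ k ≤ n − 1`, every `e ∈ Λ_k` satisfies `e ≺⁻ γ^{(k+1)}ω`. -/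
theorem dfc_lam_source_of_itTgt {α : Type*} [Fintype α] (D : DFC α) (k : ℕ)
    (hk : k + 1 ≤ D.dim D.top) (e : α) (he : D.lam k e) :
    D.precN e (D.itTgt (k + 1)) := by
  have h1 : Relation.TransGen D.stp e D.top := by
    rcases Relation.ReflTransGen.cases_head (D.le_top e) with h | ⟨c, hc, hrest⟩
    · exfalso; have h2 : D.dim e = k := he.1; rw [h] at h2; omega
    · exact Relation.TransGen.head' hc hrest
  exact (D.main he (D.dim D.top)).2 D.top rfl hk h1
end

section
/- Let C be a dendritic face complex and let d ∈ C_k be a face that is not a source (i.e. there is no c with d ≺⁻ c). Then d = γ^{(k)}ω, the iterated target of ω at dimension k. -/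
/-- Extract an explicit finite chain from a transitive-closure witness. -/
lemma dfc_chain_of_transGen {α : Type*} {r : α → α → Prop} {a b : α}
    (h : Relation.TransGen r a b) :
    ∃ p, 1 ≤ p ∧ ∃ f : ℕ → α, f 0 = a ∧ f p = b ∧ ∀ i < p, r (f i) (f (i + 1)) := by
  induction h with
  | single hr =>
    rename_i b0
    refine ⟨1, le_refl _, fun i => if i = 0 then a else b0, by simp, by simp, ?_⟩
    intro i hi
    interval_cases i
    simpa using hr
  | tail _ hr ih =>
    rename_i b0 c0 hab0
    obtain ⟨p, hp, f, hf0, hfp, hstep⟩ := ih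
    refine ⟨p + 1, by omega, fun i => if i = p + 1 then c0 else f i, ?_, by simp, ?_⟩
    · simp only [if_neg (by omega : ¬ (0 : ℕ) = p + 1)]; exact hf0
    · intro i hi
      rcases Nat.lt_or_ge i p with h1 | h1
      · simp only [if_neg (by omega : ¬ i = p + 1), if_neg (by omega : ¬ i + 1 = p + 1)]
        exact hstep i h1
      · have h2 : p = i := by omega
        subst h2
        simp only [if_neg (by omega : ¬ p = p + 1), if_pos rfl, hfp]
        exact hr

/-- For a fixed `x`, the relation "`b, a ∈ δ(x)` and `γ(a) ≺⁻ b`" is well-founded,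
by acyclicity. -/
lemma dfc_wf {α : Type*} [Fintype α] (D : DFC α) (x : α) :
    WellFounded (fun b a => D.precN a x ∧ D.precN b x ∧ D.precN (D.tgt a) b) := by
  set W : α → α → Prop := fun b a => D.precN a x ∧ D.precN b x ∧ D.precN (D.tgt a) b with hW
  have hirr : Irreflexive (Relation.TransGen W) := by
    intro a hcyc
    obtain ⟨p, hp, f, hf0, hfp, hstep⟩ := dfc_chain_of_transGen hcyc
    refine D.no_cycle x p hp (fun i => if i = p + 1 then f 1 else f i) ?_
      (by simp) ?_
    · intro i h1 h2
      simp only [if_neg (by omega : ¬ i = p + 1)]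
      have hs := hstep (i - 1) (by omega)
      have heq : i - 1 + 1 = i := by omega
      rw [heq] at hs
      exact hs.1
    · intro i h1 h2
      simp only [if_neg (by omega : ¬ i = p + 1)]
      rcases Nat.lt_or_ge i p with hlt | hge
      · simp only [if_neg (by omega : ¬ i + 1 = p + 1)]
        exact (hstep i hlt).2.2
      · have h2 : p = i := by omega
        subst h2
        simp only [if_pos rfl, hfp, ← hf0]
        exact (hstep 0 (by omega)).2.2
  have : IsTrans α (Relation.TransGen W) := ⟨fun _ _ _ h1 h2 => h1.trans h2⟩
  have : IsIrrefl α (Relation.TransGen W) := ⟨hirr⟩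
  exact Subrelation.wf (fun h => Relation.TransGen.single h)
    (Finite.wellFounded_of_trans_of_irrefl _)

/-- Key lemma: if `d` is not a source and `d = γ^{(m)}(y)` with `y ≺⁻ x`,
then `d = γ^{(m)}(γ(x))`. -/
lemma dfc_aux {α : Type*} [Fintype α] (D : DFC α) (d : α) (h : ∀ c, ¬ D.precN d c) :
    ∀ m x y, D.precN y x → D.dim y = D.dim d + m → d = D.tgt^[m] y →
      d = D.tgt^[m] (D.tgt x) := by
  intro m
  induction m with
  | zero => intro x y hyx _ hdy; exact absurd (hdy ▸ hyx) (h x)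
  | succ m' ih =>
    intro x y
    refine (dfc_wf D x).induction
      (C := fun y => D.precN y x → D.dim y = D.dim d + (m' + 1) → d = D.tgt^[m' + 1] y →
        d = D.tgt^[m' + 1] (D.tgt x)) y ?_
    clear y
    intro y innerIH hyx hdim hdy
    have h1y : 1 ≤ D.dim y := by omega
    have hty : D.precP (D.tgt y) y := D.tgt_precP y h1y
    obtain ⟨y', ⟨hne, a', b', hzb, hya, hsg⟩, -⟩ := D.thin false true x y (D.tgt y) hty hyx
    have hab : a' = b' := by
      by_contra hcon
      have := hsg.mpr hcon
      simp at this
    subst hab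
    have hdty : D.dim y = D.dim (D.tgt y) + 1 := D.dim_precP hty
    have hdy' : d = D.tgt^[m'] (D.tgt y) := by
      rwa [Function.iterate_succ_apply] at hdy
    cases a' with
    | true =>
      have h1 : D.precP (D.tgt y) y' := hzb
      have h2 : D.precP y' x := hya
      have e1 : D.tgt y = D.tgt y' := D.precP_unique h1
      have e2 : y' = D.tgt x := D.precP_unique h2
      rw [Function.iterate_succ_apply, ← e2, ← e1]
      exact hdy'
    | false =>
      have h1 : D.precN (D.tgt y) y' := hzb
      have h2 : D.precN y' x := hya
      have step := ih y' (D.tgt y) h1 (by omega) hdy'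
      have hdy'' : d = D.tgt^[m' + 1] y' := by
        rw [Function.iterate_succ_apply]; exact step
      have hdimy' : D.dim y' = D.dim d + (m' + 1) := by
        have e1 := D.dim_precN hyx
        have e2 := D.dim_precN h2
        omega
      exact innerIH y' ⟨hyx, h2, h1⟩ h2 hdimy' hdy''

/-- a face `d ∈ C_k` that is not a source is the iterated target
`γ^{(k)}ω` of `ω`. -/
theorem dfc_not_source_is_itTgt {α : Type*} [Fintype α] (D : DFC α) (k : ℕ) (d : α)
    (hd : D.dim d = k) (h : ∀ c, ¬ D.precN d c) :
    d = D.itTgt k := by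
  subst hd
  have key : ∀ x, Relation.ReflTransGen (fun a b => D.precN a b ∨ D.precP a b) d x →
      D.dim d ≤ D.dim x ∧ d = D.tgt^[D.dim x - D.dim d] x := by
    intro x hx
    induction hx with
    | refl => simp
    | tail hrt hstep ih =>
      rename_i y x'
      obtain ⟨hle, hdy⟩ := ih
      have hdx : D.dim x' = D.dim y + 1 := by
        rcases hstep with hs | hs
        · exact D.dim_precN hs
        · exact D.dim_precP hs
      have hm : D.dim x' - D.dim d = (D.dim y - D.dim d) + 1 := by omega
      refine ⟨by omega, ?_⟩
      rw [hm, Function.iterate_succ_apply]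
      rcases hstep with hs | hs
      · exact dfc_aux D d h (D.dim y - D.dim d) x' y hs (by omega) hdy
      · rw [← D.precP_unique hs]; exact hdy
  exact (key D.top (D.le_top d)).2
end

section
/- Let C be a dendritic face complex and let d ∈ C_k be a target, i.e. there exists some c₀ ∈ C_{k+1} with d ≺⁺ c₀. Then there is a unique c ∈ Λ_{k+1} with d ≺⁺ c (i.e. d = γ(c)). -/
namespace DFC

variable {α : Type*} [Fintype α] (D : DFC α)

/-- The face order: reflexive-transitive closure of the one-step face relations. -/
def le (x y : α) : Prop := Relation.ReflTransGen (fun a b => D.precN a b ∨ D.precP a b) x y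

lemma le_top' (x : α) : D.le x D.top := D.le_top x

lemma le_refl' (x : α) : D.le x x := Relation.ReflTransGen.refl

lemma le_trans' {x y z : α} (h1 : D.le x y) (h2 : D.le y z) : D.le x z :=
  Relation.ReflTransGen.trans h1 h2

lemma le_single {x y : α} (h : D.precN x y ∨ D.precP x y) : D.le x y :=
  Relation.ReflTransGen.single h

lemma dim_rel {x y : α} (h : D.precN y x ∨ D.precP y x) : D.dim x = D.dim y + 1 :=
  h.elim D.dim_precN D.dim_precP

lemma dim_le {x y : α} (h : D.le x y) : D.dim x ≤ D.dim y := by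
  induction h with
  | refl => exact Nat.le_refl _
  | tail _ hbc ih => have := D.dim_rel hbc; omega

lemma le_eq_of_dim {x y : α} (h : D.le x y) (hd : D.dim y ≤ D.dim x) : x = y := by
  rcases h.cases_tail with h' | ⟨c, hxc, hcy⟩
  · exact h'.symm
  · have h1 := D.dim_le hxc
    have h2 := D.dim_rel hcy
    omega

lemma exists_mid {x y : α} (h : D.le x y) (hne : x ≠ y) :
    ∃ b, D.le x b ∧ (D.precN b y ∨ D.precP b y) := by
  rcases h.cases_tail with h' | hb
  · exact absurd h'.symm hne
  · exact hb

lemma prec_of_le_succ {c τ : α} (h : D.le c τ) (hd : D.dim c + 1 = D.dim τ) :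
    D.precN c τ ∨ D.precP c τ := by
  have hne : c ≠ τ := by intro he; subst he; omega
  obtain ⟨b, hcb, hbτ⟩ := D.exists_mid h hne
  have h1 := D.dim_rel hbτ
  have h2 : c = b := D.le_eq_of_dim hcb (by omega)
  exact h2 ▸ hbτ

lemma sign_eq {s t : Bool} {z y : α} (h1 : sprec D.precN D.precP s z y)
    (h2 : sprec D.precN D.precP t z y) : s = t := by
  cases s <;> cases t
  · rfl
  · exact absurd ⟨h1, h2⟩ (D.not_both z y)
  · exact absurd ⟨h2, h1⟩ (D.not_both z y)
  · rfl

lemma partner {a b : Bool} {x y z : α} (hzy : sprec D.precN D.precP b z y)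
    (hyx : sprec D.precN D.precP a y x) :
    ∃ y' a' b', y' ≠ y ∧ sprec D.precN D.precP b' z y' ∧ sprec D.precN D.precP a' y' x ∧
      ((a = b) ↔ ¬ (a' = b')) := by
  obtain ⟨y', ⟨hne, a', b', h1, h2, h3⟩, -⟩ := D.thin a b x y z hzy hyx
  exact ⟨y', a', b', hne, h1, h2, h3⟩

/-- From any wedge `z ≺ y ≺ x` one gets an odd-parity incidence `z ≺^{b'} y' ≺^{a'} x`. -/
lemma odd_exists {x y z : α} (hzy : D.precN z y ∨ D.precP z y)
    (hyx : D.precN y x ∨ D.precP y x) :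
    ∃ y', (D.precP z y' ∧ D.precN y' x) ∨ (D.precN z y' ∧ D.precP y' x) := by
  obtain ⟨b, hb⟩ : ∃ b, sprec D.precN D.precP b z y :=
    hzy.elim (fun h => ⟨false, h⟩) (fun h => ⟨true, h⟩)
  obtain ⟨a, ha⟩ : ∃ a, sprec D.precN D.precP a y x :=
    hyx.elim (fun h => ⟨false, h⟩) (fun h => ⟨true, h⟩)
  by_cases hab : a = b
  · obtain ⟨y', a', b', _, h1, h2, h3⟩ := D.partner hb ha
    have hne : a' ≠ b' := h3.mp hab
    cases a' <;> cases b'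
    · exact absurd rfl hne
    · exact ⟨y', Or.inl ⟨h1, h2⟩⟩
    · exact ⟨y', Or.inr ⟨h1, h2⟩⟩
    · exact absurd rfl hne
  · cases a <;> cases b
    · exact absurd rfl hab
    · exact ⟨y, Or.inl ⟨hb, ha⟩⟩
    · exact ⟨y, Or.inr ⟨hb, ha⟩⟩
    · exact absurd rfl hab

/-- Uniqueness of the odd-parity incidence over a fixed `z` under a fixed `x`. -/
lemma odd_unique {x z y₁ y₂ : α}
    (h1 : (D.precP z y₁ ∧ D.precN y₁ x) ∨ (D.precN z y₁ ∧ D.precP y₁ x))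
    (h2 : (D.precP z y₂ ∧ D.precN y₂ x) ∨ (D.precN z y₂ ∧ D.precP y₂ x)) :
    y₁ = y₂ := by
  obtain ⟨a₁, b₁, hl₁, hu₁, hne₁⟩ :
      ∃ a b, sprec D.precN D.precP b z y₁ ∧ sprec D.precN D.precP a y₁ x ∧ a ≠ b := by
    rcases h1 with ⟨hp, hn⟩ | ⟨hn, hp⟩
    · exact ⟨false, true, hp, hn, by simp⟩
    · exact ⟨true, false, hn, hp, by simp⟩
  obtain ⟨a₂, b₂, hl₂, hu₂, hne₂⟩ :
      ∃ a b, sprec D.precN D.precP b z y₂ ∧ sprec D.precN D.precP a y₂ x ∧ a ≠ b := by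
    rcases h2 with ⟨hp, hn⟩ | ⟨hn, hp⟩
    · exact ⟨false, true, hp, hn, by simp⟩
    · exact ⟨true, false, hn, hp, by simp⟩
  obtain ⟨y₃, a₃, b₃, hne₃, h3l, h3u, hpar⟩ := D.partner hl₁ hu₁
  have h33 : a₃ = b₃ := by
    by_contra hc
    exact hne₁ (hpar.mpr hc)
  obtain ⟨yy, -, huniq⟩ := D.thin a₃ b₃ x y₃ z h3l h3u
  have key : ∀ y a b, sprec D.precN D.precP b z y → sprec D.precN D.precP a y x →
      a ≠ b → y = yy := by
    intro y a b hlb hua hne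
    refine huniq y ⟨?_, a, b, hlb, hua, ?_⟩
    · intro he
      subst he
      have e1 := D.sign_eq hlb h3l
      have e2 := D.sign_eq hua h3u
      subst e1; subst e2
      exact hne h33
    · constructor
      · intro _; exact hne
      · intro _; exact h33
  exact (key y₁ a₁ b₁ hl₁ hu₁ hne₁).trans (key y₂ a₂ b₂ hl₂ hu₂ hne₂).symm

/-- Root existence: some source of `σ` has the same target as `γσ`. -/
lemma root_exists {σ : α} (h2 : 2 ≤ D.dim σ) :
    ∃ u, D.precN u σ ∧ D.tgt u = D.tgt (D.tgt σ) := by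
  have hg : D.precP (D.tgt σ) σ := D.tgt_precP σ (by omega)
  have hdg : D.dim σ = D.dim (D.tgt σ) + 1 := D.dim_precP hg
  have hgg : D.precP (D.tgt (D.tgt σ)) (D.tgt σ) := D.tgt_precP _ (by omega)
  obtain ⟨y', a', b', hne, hl, hu, hpar⟩ :=
    D.partner (a := true) (b := true) (x := σ) hgg hg
  have : a' ≠ b' := hpar.mp rfl
  cases a' <;> cases b'
  · exact absurd rfl this
  · -- a' = false, b' = true : `precP (γγσ) y'` and `precN y' σ`
    exact ⟨y', hu, (D.precP_unique hl).symm⟩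
  · -- a' = true, b' = false : `precN (γγσ) y'` and `precP y' σ`, so `y' = γσ`, contra
    exfalso
    have he : y' = D.tgt σ := D.precP_unique hu
    subst he
    exact D.not_both _ _ ⟨hl, hgg⟩
  · exact absurd rfl this

/-- Every source `u` of `τ` either shares its target with `γτ`, or its target is a
source of another source of `τ`. -/
lemma child_or_exit {τ u : α} (h2 : 2 ≤ D.dim τ) (hu : D.precN u τ) :
    D.tgt u = D.tgt (D.tgt τ) ∨ ∃ u', D.precN u' τ ∧ D.precN (D.tgt u) u' := by
  have hdu : D.dim τ = D.dim u + 1 := D.dim_precN hu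
  have htu : D.precP (D.tgt u) u := D.tgt_precP u (by omega)
  obtain ⟨y', a', b', hne, hl, hu', hpar⟩ :=
    D.partner (a := false) (b := true) (x := τ) htu hu
  have hpar' : a' = b' := by
    by_contra hc
    simpa using hpar.mpr hc
  cases a' <;> cases b'
  · -- both negative: `precN (tgt u) y'` and `precN y' τ`
    exact Or.inr ⟨y', hu', hl⟩
  · simp at hpar'
  · simp at hpar'
  · -- both positive: `y' = γτ` and `tgt u = tgt (γτ)`
    have he : y' = D.tgt τ := D.precP_unique hu'
    subst he
    exact Or.inl (D.precP_unique hl)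

end DFC
namespace DFC

variable {α : Type*} [Fintype α] (D : DFC α)

/-- Odd slot of a codimension-2 face `z` of `x` : either `z` is the target of a source
of `x`, or `z` is a source of the target of `x`. -/
lemma odd_slot {x y z : α} (hzy : D.precN z y ∨ D.precP z y)
    (hyx : D.precN y x ∨ D.precP y x) :
    (∃ u, D.precP z u ∧ D.precN u x) ∨ D.precN z (D.tgt x) := by
  obtain ⟨y', h | h⟩ := D.odd_exists hzy hyx
  · exact Or.inl ⟨y', h⟩
  · have he : y' = D.tgt x := D.precP_unique h.2
    exact Or.inr (he ▸ h.1)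

omit [Fintype α] in
lemma transGen_chain {r : α → α → Prop} {a b : α} (h : Relation.TransGen r a b) :
    ∃ q, ∃ w : ℕ → α, 1 ≤ q ∧ w 0 = a ∧ w q = b ∧ ∀ i < q, r (w i) (w (i + 1)) := by
  induction h with
  | @single b h =>
    refine ⟨1, fun i => if i = 0 then a else b, le_refl _, by simp, by simp, ?_⟩
    intro i hi
    interval_cases i
    simpa using h
  | @tail b c _ hbc ih =>
    obtain ⟨q, w, hq, h0, hqb, hstep⟩ := ih
    refine ⟨q + 1, fun i => if i = q + 1 then c else w i, by omega, by simp [h0], by simp, ?_⟩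
    intro i hi
    rcases Nat.lt_or_ge i q with h' | h'
    · simpa [Nat.ne_of_lt (by omega : i < q + 1), Nat.ne_of_lt (by omega : i + 1 < q + 1), Nat.ne_of_lt h']
        using hstep i h'
    · have : i = q := by omega
      subst this
      simpa [Nat.ne_of_lt (by omega : i < i + 1), hqb] using hbc

/-- `u'` is a child of `u` among the sources of `τ` : `γu'` is a source of `u`. -/
def Child (τ u' u : α) : Prop := D.precN u' τ ∧ D.precN u τ ∧ D.precN (D.tgt u') u

lemma child_irrefl (τ : α) : ∀ u, ¬ Relation.TransGen (D.Child τ) u u := by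
  intro u h
  obtain ⟨q, w, hq, h0, hqu, hstep⟩ := transGen_chain h
  have hmem : ∀ j ≤ q, D.precN (w j) τ := by
    intro j hj
    rcases Nat.lt_or_ge j q with h' | h'
    · exact (hstep j h').1
    · have : j = q := by omega
      subst this
      have hwq : w j = w 0 := by rw [hqu, h0]
      rw [hwq]
      exact (hstep 0 (by omega)).1
  refine D.no_cycle τ q hq (fun i => w (q + 1 - i)) ?_ ?_ ?_
  · intro i h1 hi
    exact hmem (q + 1 - i) (by omega)
  · show w (q + 1 - (q + 1)) = w (q + 1 - 1)
    rw [show q + 1 - (q + 1) = 0 from by omega, show q + 1 - 1 = q from by omega, h0, hqu]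
  · intro i h1 hi
    have e1 : q + 1 - (i + 1) = q - i := by omega
    have e2 : q + 1 - i = (q - i) + 1 := by omega
    show D.precN (D.tgt (w (q + 1 - (i + 1)))) (w (q + 1 - i))
    rw [e1, e2]
    exact (hstep (q - i) (by omega)).2.2

lemma wf_transGen_child (τ : α) : WellFounded (Relation.TransGen (D.Child τ)) := by
  have : IsTrans α (Relation.TransGen (D.Child τ)) := ⟨fun _ _ _ h h' => h.trans h'⟩
  have : IsIrrefl α (Relation.TransGen (D.Child τ)) := ⟨fun u => D.child_irrefl τ u⟩
  exact Finite.wellFounded_of_trans_of_irrefl _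

lemma wf_child (τ : α) : WellFounded (D.Child τ) :=
  Subrelation.wf (fun h => Relation.TransGen.single h) (D.wf_transGen_child τ)

lemma wf_child_flip (τ : α) : WellFounded (fun y x => D.Child τ x y) := by
  have : IsTrans α (Relation.TransGen (Function.swap (D.Child τ))) :=
    ⟨fun _ _ _ h h' => h.trans h'⟩
  have : IsIrrefl α (Relation.TransGen (Function.swap (D.Child τ))) :=
    ⟨fun u h => D.child_irrefl τ u (Relation.transGen_swap.mp h)⟩
  exact Subrelation.wf (r := Relation.TransGen (Function.swap (D.Child τ)))
    (fun h => Relation.TransGen.single h)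
    (Finite.wellFounded_of_trans_of_irrefl (Relation.TransGen (Function.swap (D.Child τ))))

/-- `d` is a target within the closed cell `C(τ)`. -/
def TgtIn (τ d : α) : Prop := ∃ c, D.le c τ ∧ D.precP d c

/-- `c` is the target of no face of the closed cell `C(τ)`. -/
def NTgt (τ c : α) : Prop := ∀ x, D.le x τ → ¬ D.precP c x

/-- Descent: if `u` is a source of `τ`, then the double target of `u` is a target
within `C(γτ)`. -/
lemma desc {τ : α} (h3 : 3 ≤ D.dim τ) :
    ∀ u, D.precN u τ → D.TgtIn (D.tgt τ) (D.tgt (D.tgt u)) := by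
  intro u
  refine (D.wf_child τ).induction
    (C := fun u => D.precN u τ → D.TgtIn (D.tgt τ) (D.tgt (D.tgt u))) u ?_
  intro u ih hu
  have hdimu : D.dim τ = D.dim u + 1 := D.dim_precN hu
  obtain ⟨c₂, hc₂u, hc₂t⟩ := D.root_exists (σ := u) (by omega)
  have hdimc₂ : D.dim u = D.dim c₂ + 1 := D.dim_precN hc₂u
  rcases D.odd_slot (Or.inl hc₂u) (Or.inl hu) with ⟨u₂, hP, hu₂τ⟩ | hexit
  · have htu₂ : c₂ = D.tgt u₂ := D.precP_unique hP
    have hchild : D.Child τ u₂ u := ⟨hu₂τ, hu, by rw [← htu₂]; exact hc₂u⟩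
    have := ih u₂ hchild hu₂τ
    rwa [← htu₂, hc₂t] at this
  · refine ⟨c₂, D.le_single (Or.inl hexit), ?_⟩
    have hp : D.precP (D.tgt c₂) c₂ := D.tgt_precP c₂ (by omega)
    rwa [hc₂t] at hp

end DFC
namespace DFC

variable {α : Type*} [Fintype α] (D : DFC α)

theorem main_induction (N : ℕ) : ∀ (τ : α), D.dim τ = N →
    (∀ d, D.dim d + 3 ≤ N → D.TgtIn τ d → D.TgtIn (D.tgt τ) d) ∧
    (∀ c, D.dim c + 2 ≤ N → D.le c τ →
      (D.NTgt τ c ↔ (D.le c (D.tgt τ) ∧ D.NTgt (D.tgt τ) c))) ∧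
    (∀ d, D.TgtIn τ d → ∃! c, D.le c τ ∧ D.precP d c ∧ D.NTgt τ c) := by
  induction N using Nat.strong_induction_on with
  | _ N IH =>
  intro τ hτ
  have hγdim : 1 ≤ N → D.dim (D.tgt τ) + 1 = N := fun h1 => by
    have := D.dim_precP (D.tgt_precP τ (by omega))
    omega
  have hγle : 1 ≤ N → D.le (D.tgt τ) τ := fun h1 =>
    D.le_single (Or.inr (D.tgt_precP τ (by omega)))
  -- Target transfer (TT)
  have hTT : ∀ d, D.dim d + 3 ≤ N → D.TgtIn τ d → D.TgtIn (D.tgt τ) d := by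
    rintro d hd3 ⟨c, hcτ, hdc⟩
    have hdimc : D.dim c = D.dim d + 1 := by have := D.dim_precP hdc; omega
    have hcd : d = D.tgt c := D.precP_unique hdc
    rcases Nat.lt_or_ge (D.dim d + 3) N with h4' | h3'
    · -- gap ≥ 4 : climb along the tree of sources of τ
      have hne : c ≠ τ := by intro he; subst he; omega
      obtain ⟨b, hcb, hbτ⟩ := D.exists_mid hcτ hne
      rcases hbτ with hbN | hbP
      · have climb : ∀ b, D.precN b τ → D.TgtIn b d → D.TgtIn (D.tgt τ) d := by
          intro b
          refine (D.wf_child_flip τ).induction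
            (C := fun b => D.precN b τ → D.TgtIn b d → D.TgtIn (D.tgt τ) d) b ?_
          rintro b ihb hbτ ⟨c', hc'b, hp'⟩
          have hdimb : D.dim b + 1 = N := by have := D.dim_precN hbτ; omega
          obtain ⟨c'', hc'', hp''⟩ :=
            (IH (D.dim b) (by omega) b rfl).1 d (by omega) ⟨c', hc'b, hp'⟩
          rcases D.child_or_exit (by omega) hbτ with hexit | ⟨b₁, hb₁τ, hchild⟩
          · refine ⟨c'', ?_, hp''⟩
            refine D.le_trans' (hexit ▸ hc'') (D.le_single (Or.inr (D.tgt_precP _ ?_)))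
            have := hγdim (by omega)
            omega
          · exact ihb b₁ ⟨hbτ, hb₁τ, hchild⟩ hb₁τ
              ⟨c'', D.le_trans' hc'' (D.le_single (Or.inl hchild)), hp''⟩
        exact climb b hbN ⟨c, hcb, hdc⟩
      · have hb : b = D.tgt τ := D.precP_unique hbP
        exact ⟨c, hb ▸ hcb, hdc⟩
    · -- gap = 3 : descend inside the tree of sources of τ
      have hne : c ≠ τ := by intro he; subst he; omega
      obtain ⟨b, hcb, hbτ⟩ := D.exists_mid hcτ hne
      have hdimb : D.dim b + 1 = N := by have := D.dim_rel hbτ; omega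
      have hrel := D.prec_of_le_succ hcb (by omega)
      rcases D.odd_slot hrel hbτ with ⟨u, hpu, hun⟩ | hng
      · have hdes := D.desc (τ := τ) (by omega) u hun
        rwa [← D.precP_unique hpu, ← hcd] at hdes
      · exact ⟨c, D.le_single (Or.inl hng), hdc⟩
  -- Localization of non-targets (LOC)
  have hLOC : ∀ c, D.dim c + 2 ≤ N → D.le c τ →
      (D.NTgt τ c ↔ (D.le c (D.tgt τ) ∧ D.NTgt (D.tgt τ) c)) := by
    intro c hc2 hcτ
    have hγd : D.dim (D.tgt τ) + 1 = N := hγdim (by omega)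
    have hγτ : D.le (D.tgt τ) τ := hγle (by omega)
    constructor
    · intro hNT
      have hle : D.le c (D.tgt τ) := by
        have hne : c ≠ τ := by intro he; subst he; omega
        obtain ⟨b, hcb, hbτ⟩ := D.exists_mid hcτ hne
        rcases hbτ with hbN | hbP
        · rcases Nat.lt_or_ge (D.dim c + 2) N with h3' | h2'
          · have climb : ∀ b, D.precN b τ → D.le c b → D.le c (D.tgt τ) := by
              intro b
              refine (D.wf_child_flip τ).induction
                (C := fun b => D.precN b τ → D.le c b → D.le c (D.tgt τ)) b ?_
              intro b ihb hbτ hcb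
              have hdimb : D.dim b + 1 = N := by have := D.dim_precN hbτ; omega
              have hLOCb := (IH (D.dim b) (by omega) b rfl).2.1
              have hNTb : D.NTgt b c := fun x hx =>
                hNT x (D.le_trans' hx (D.le_single (Or.inl hbτ)))
              have hcgb := ((hLOCb c (by omega) hcb).mp hNTb).1
              rcases D.child_or_exit (by omega) hbτ with hexit | ⟨b₁, hb₁τ, hchild⟩
              · exact D.le_trans' (hexit ▸ hcgb)
                  (D.le_single (Or.inr (D.tgt_precP _ (by omega))))
              · exact ihb b₁ ⟨hbτ, hb₁τ, hchild⟩ hb₁τ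
                  (D.le_trans' hcgb (D.le_single (Or.inl hchild)))
            exact climb b hbN hcb
          · have hrel := D.prec_of_le_succ hcb (by have := D.dim_precN hbN; omega)
            rcases D.odd_slot hrel (Or.inl hbN) with ⟨u, hpu, hun⟩ | hng
            · exact absurd hpu (hNT u (D.le_single (Or.inl hun)))
            · exact D.le_single (Or.inl hng)
        · have hb : b = D.tgt τ := D.precP_unique hbP
          exact hb ▸ hcb
      exact ⟨hle, fun x hx => hNT x (D.le_trans' hx hγτ)⟩
    · rintro ⟨hcγ, hntγ⟩ x hxτ hpcx
      have hdx : D.dim x = D.dim c + 1 := D.dim_precP hpcx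
      rcases Nat.lt_or_ge (D.dim c + 2) N with h3' | h2'
      · obtain ⟨x', hx', hpx'⟩ := hTT c (by omega) ⟨x, hxτ, hpcx⟩
        exact hntγ x' hx' hpx'
      · rcases D.prec_of_le_succ hxτ (by omega) with hn | hp
        · rcases D.prec_of_le_succ hcγ (by omega) with hcg | hcp'
          · have hx : x = D.tgt τ := D.odd_unique (Or.inl ⟨hpcx, hn⟩)
              (Or.inr ⟨hcg, D.tgt_precP τ (by omega)⟩)
            refine D.not_both x τ ⟨hn, ?_⟩
            rw [hx]
            exact D.tgt_precP τ (by omega)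
          · exact hntγ (D.tgt τ) (D.le_refl' _) hcp'
        · have hx : x = D.tgt τ := D.precP_unique hp
          refine hntγ x ?_ hpcx
          rw [hx]
          exact D.le_refl' _
  -- Unique non-target over a target (S6)
  have hS6 : ∀ d, D.TgtIn τ d → ∃! c, D.le c τ ∧ D.precP d c ∧ D.NTgt τ c := by
    rintro d ⟨c₀, hc₀τ, hdc₀⟩
    have hdim₀ : D.dim c₀ = D.dim d + 1 := by have := D.dim_precP hdc₀; omega
    have hge : D.dim d + 1 ≤ N := by have := D.dim_le hc₀τ; omega
    rcases Nat.lt_or_ge (D.dim d + 2) N with h3 | h2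
    · -- gap ≥ 3
      obtain ⟨c', hc'γ, hpc'⟩ := hTT d (by omega) ⟨c₀, hc₀τ, hdc₀⟩
      have hγd : D.dim (D.tgt τ) + 1 = N := hγdim (by omega)
      have hγτ : D.le (D.tgt τ) τ := hγle (by omega)
      obtain ⟨c, ⟨hcγ, hpc, hntγ⟩, huniqγ⟩ :=
        (IH (D.dim (D.tgt τ)) (by omega) (D.tgt τ) rfl).2.2 d ⟨c', hc'γ, hpc'⟩
      have hdc : D.dim c = D.dim d + 1 := by have := D.dim_precP hpc; omega
      have hcτ : D.le c τ := D.le_trans' hcγ hγτ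
      refine ⟨c, ⟨hcτ, hpc, (hLOC c (by omega) hcτ).mpr ⟨hcγ, hntγ⟩⟩, ?_⟩
      rintro c' ⟨hle', hp', hnt'⟩
      obtain ⟨h1', h2'⟩ := (hLOC c' (by have := D.dim_precP hp'; omega) hle').mp hnt'
      exact huniqγ c' ⟨h1', hp', h2'⟩
    · rcases Nat.lt_or_ge (D.dim d + 1) N with h2' | h1'
      · -- gap = 2
        obtain ⟨u, huτ, hdu⟩ : ∃ u, D.precN u τ ∧ D.precP d u := by
          rcases D.prec_of_le_succ hc₀τ (by omega) with hn | hp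
          · exact ⟨c₀, hn, hdc₀⟩
          · have hc₀g : c₀ = D.tgt τ := D.precP_unique hp
            have hdd : d = D.tgt c₀ := D.precP_unique hdc₀
            obtain ⟨u, huτ, hut⟩ := D.root_exists (σ := τ) (by omega)
            refine ⟨u, huτ, ?_⟩
            have h := D.tgt_precP u (by have := D.dim_precN huτ; omega)
            rwa [hut, ← hc₀g, ← hdd] at h
        have hNTu : D.NTgt τ u := by
          intro x hxτ hpux
          have hd1 := D.dim_precP hpux
          have hd2 := D.dim_precN huτ
          have hx : x = τ := D.le_eq_of_dim hxτ (by omega)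
          refine D.not_both u τ ⟨huτ, ?_⟩
          rw [← hx]
          exact hpux
        refine ⟨u, ⟨D.le_single (Or.inl huτ), hdu, hNTu⟩, ?_⟩
        rintro c' ⟨hle', hp', hnt'⟩
        rcases D.prec_of_le_succ hle' (by have := D.dim_precP hp'; omega) with hn' | hp''
        · exact D.odd_unique (Or.inl ⟨hp', hn'⟩) (Or.inl ⟨hdu, huτ⟩)
        · exact absurd hp'' (hnt' τ (D.le_refl' _))
      · -- gap = 1
        have hc₀ : c₀ = τ := D.le_eq_of_dim hc₀τ (by omega)
        have hpτ : D.precP d τ := by rw [← hc₀]; exact hdc₀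
        refine ⟨τ, ⟨D.le_refl' _, hpτ, ?_⟩, ?_⟩
        · intro x hx hp
          have := D.dim_precP hp
          have := D.dim_le hx
          omega
        · rintro c' ⟨hle', hp', -⟩
          exact D.le_eq_of_dim hle' (by have := D.dim_precP hp'; omega)
  exact ⟨hTT, hLOC, hS6⟩

end DFC

/-- every target `d ∈ C_k` is the target of a unique `c ∈ Λ_{k+1}`. -/
theorem dfc_target_of_unique_lam {α : Type*} [Fintype α] (D : DFC α) (k : ℕ) (d : α)
    (hd : D.dim d = k) (h : ∃ c₀, D.precP d c₀) :
    ∃! c, D.lam (k + 1) c ∧ D.precP d c := by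
  obtain ⟨c₀, hc₀⟩ := h
  have hS6 := (D.main_induction (D.dim D.top) D.top rfl).2.2
  obtain ⟨c, ⟨hcle, hcp, hcnt⟩, huniq⟩ := hS6 d ⟨c₀, D.le_top' c₀, hc₀⟩
  refine ⟨c, ⟨⟨?_, fun x => hcnt x (D.le_top' x)⟩, hcp⟩, ?_⟩
  · have := D.dim_precP hcp
    omega
  · rintro c' ⟨⟨hdim', hnt'⟩, hp'⟩
    exact huniq c' ⟨D.le_top' c', hp', fun x _ => hnt' x⟩
end

section
/- Let C be a dendritic face complex and let 0 ≤ k ≤ n−1. If d ≺⁻ γ^{(k+1)}ω, then d ∈ Λ_k (every source of the iterated target of ω at dimension k+1 is not the target of any face). -/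
namespace DFC

variable {α : Type*} [Fintype α]

lemma aux_dim_iterate (D : DFC α) : ∀ j, j ≤ D.dim D.top →
    D.dim (D.tgt^[j] D.top) = D.dim D.top - j := by
  intro j
  induction j with
  | zero => intro _; simp
  | succ j ih =>
    intro hj
    have h1 : D.dim (D.tgt^[j] D.top) = D.dim D.top - j := ih (by omega)
    rw [Function.iterate_succ_apply']
    have h2 := D.dim_precP (D.tgt_precP (D.tgt^[j] D.top) (by omega))
    omega

lemma aux_dim_itTgt (D : DFC α) {m : ℕ} (hm : m ≤ D.dim D.top) :
    D.dim (D.itTgt m) = m := by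
  have := D.aux_dim_iterate (D.dim D.top - m) (by omega)
  unfold itTgt
  omega

lemma aux_itTgt_succ (D : DFC α) {m : ℕ} (hm : m + 1 ≤ D.dim D.top) :
    D.itTgt m = D.tgt (D.itTgt (m + 1)) := by
  unfold itTgt
  have h : D.dim D.top - m = (D.dim D.top - (m + 1)) + 1 := by omega
  rw [h, Function.iterate_succ_apply']

lemma aux_rtg_dim (D : DFC α) {x y : α} (h : Relation.ReflTransGen D.precN x y) :
    x = y ∨ D.dim x < D.dim y := by
  induction h with
  | refl => exact Or.inl rfl
  | tail _ hstep ih =>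
    have := D.dim_precN hstep
    rcases ih with rfl | hlt
    · right; omega
    · right; omega

/-- Pushing a "bad" chain through a target: if `d ≺⁺ c` and there is a `≺⁻`-chain
from `c` to `v = γ(v')`, then there is a bad cell with a `≺⁻`-chain to `v'`. -/
lemma aux_pushP (D : DFC α) {d v v' : α} (hvv' : D.precP v v') {c : α}
    (hc : D.precP d c) (hch : Relation.ReflTransGen D.precN c v) :
    ∃ c', D.precP d c' ∧ Relation.ReflTransGen D.precN c' v' := by
  rcases hch.cases_tail with heq | ⟨w, hcw, hwv⟩
  · -- c = v : chain d ≺⁺ v ≺⁺ v'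
    subst heq
    obtain ⟨y', ⟨hne, a', b', h1, h2, hs⟩, _⟩ :=
      D.thin true true v' v d (by simpa [sprec] using hc) (by simpa [sprec] using hvv')
    cases a' <;> cases b' <;> simp [sprec] at hs h1 h2
    · -- d ≺⁺ y' ≺⁻ v'
      exact ⟨y', h1, Relation.ReflTransGen.single h2⟩
    · -- d ≺⁻ y' ≺⁺ v' : y' = tgt v' = c, contradiction
      exact absurd ((D.precP_unique h2).trans (D.precP_unique hvv').symm) hne
  · -- chain ends w ≺⁻ v ≺⁺ v'
    obtain ⟨y', ⟨hne, a', b', h1, h2, hs⟩, _⟩ :=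
      D.thin true false v' v w (by simpa [sprec] using hwv) (by simpa [sprec] using hvv')
    cases a' <;> cases b' <;> simp [sprec] at hs h1 h2
    · -- w ≺⁻ y' ≺⁻ v'
      exact ⟨c, hc, (hcw.tail h1).tail h2⟩
    · -- w ≺⁺ y' ≺⁺ v' : y' = tgt v' = v, contradiction
      exact absurd ((D.precP_unique h2).trans (D.precP_unique hvv').symm) hne

/-- If `d ≺⁻ γ(b)`, then no source of `b` has `d` as its target. -/
lemma aux_lemA (D : DFC α) {d b : α} (hb : 1 ≤ D.dim b) (hdt : D.precN d (D.tgt b))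
    {y : α} (hy : D.precN y b) (hdy : D.precP d y) : False := by
  have htb : D.precP (D.tgt b) b := D.tgt_precP b hb
  obtain ⟨y'', ⟨hne, a', b', h1, h2, hs⟩, _⟩ :=
    D.thin false true b y d (by simpa [sprec] using hdy) (by simpa [sprec] using hy)
  cases a' <;> cases b' <;> simp [sprec] at hs h1 h2
  · -- d ≺⁻ y'' ≺⁻ b
    obtain ⟨z, hz, huniq⟩ :=
      D.thin false false b y'' d (by simpa [sprec] using h1) (by simpa [sprec] using h2)
    have hyney'' : y ≠ y'' := by
      intro hEq; exact D.not_both d y ⟨hEq ▸ h1, hdy⟩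
    have htney'' : D.tgt b ≠ y'' := by
      intro hEq; exact D.not_both y'' b ⟨h2, hEq ▸ htb⟩
    have w1 : y = z := huniq y ⟨hyney'', false, true, by simpa [sprec] using hdy,
      by simpa [sprec] using hy, by simp⟩
    have w2 : D.tgt b = z := huniq (D.tgt b) ⟨htney'', true, false,
      by simpa [sprec] using hdt, by simpa [sprec] using htb, by simp⟩
    have : y = D.tgt b := w1.trans w2.symm
    exact D.not_both d y ⟨this ▸ hdt, hdy⟩
  · -- d ≺⁺ y'' ≺⁺ b : y'' = tgt b, so d ≺⁺ tgt b and d ≺⁻ tgt b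
    have : y'' = D.tgt b := D.precP_unique h2
    exact D.not_both d (D.tgt b) ⟨hdt, this ▸ h1⟩

/-- The "grafting" relation on the sources of `b`. -/
def chRel (D : DFC α) (b : α) (a c : α) : Prop :=
  D.precN a b ∧ D.precN c b ∧ D.precN (D.tgt a) c

lemma aux_transGen_seq {r : α → α → Prop} {u v : α} (h : Relation.TransGen r u v) :
    ∃ p, 1 ≤ p ∧ ∃ z : ℕ → α, z 0 = u ∧ z p = v ∧ ∀ i < p, r (z i) (z (i + 1)) := by
  induction h with
  | @single w h =>
    refine ⟨1, le_refl _, fun i => if i = 0 then u else w, by simp, by simp, ?_⟩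
    intro i hi
    interval_cases i
    simpa using h
  | @tail w x _ hbc ih =>
    obtain ⟨p, hp, z, h0, hpv, hstep⟩ := ih
    refine ⟨p + 1, by omega, fun i => if i ≤ p then z i else x, by simp [h0], by simp, ?_⟩
    intro i hi
    rcases Nat.lt_or_ge i p with h' | h'
    · simpa [Nat.le_of_lt h', Nat.succ_le_of_lt h'] using hstep i h'
    · have : i = p := by omega
      subst this
      simpa [hpv] using hbc

lemma aux_no_transGen_cycle (D : DFC α) (b v : α) :
    ¬ Relation.TransGen (D.chRel b) v v := by
  intro h
  obtain ⟨p, hp, z, h0, hpv, hstep⟩ := aux_transGen_seq h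
  have hall : ∀ j ≤ p, D.precN (z j) b := by
    intro j hj
    rcases Nat.lt_or_ge j p with h' | h'
    · exact (hstep j h').1
    · have : j = p := by omega
      subst this
      rw [hpv, ← h0]
      exact (hstep 0 (by omega)).1
  refine D.no_cycle b p hp (fun i => z (p + 1 - i))
    (fun i h1 h2 => hall (p + 1 - i) (by omega))
    (by show z (p + 1 - (p + 1)) = z (p + 1 - 1)
        rw [Nat.sub_self, Nat.add_sub_cancel, h0, hpv]) ?_
  intro i h1 h2
  show D.precN (D.tgt (z (p + 1 - (i + 1)))) (z (p + 1 - i))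
  have e1 : p + 1 - (i + 1) = p - i := by omega
  have e2 : p + 1 - i = (p - i) + 1 := by omega
  rw [e1, e2]
  exact (hstep (p - i) (by omega)).2.2

lemma aux_chRel_wf (D : DFC α) (b : α) : WellFounded (D.chRel b) := by
  have hwf : WellFounded (Relation.TransGen (D.chRel b)) := by
    have : IsIrrefl α (Relation.TransGen (D.chRel b)) :=
      ⟨fun v hv => D.aux_no_transGen_cycle b v hv⟩
    have : IsTrans α (Relation.TransGen (D.chRel b)) :=
      ⟨fun _ _ _ h1 h2 => h1.trans h2⟩
    exact Finite.wellFounded_of_trans_of_irrefl _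
  exact Subrelation.wf (fun h => Relation.TransGen.single h) hwf

end DFC

/-- for `0 ≤ k ≤ n − 1`, every source of `γ^{(k+1)}ω` lies in `Λ_k`. -/
theorem dfc_source_of_itTgt_in_lam {α : Type*} [Fintype α] (D : DFC α) (k : ℕ)
    (hk : k + 1 ≤ D.dim D.top) (d : α) (h : D.precN d (D.itTgt (k + 1))) :
    D.lam k d := by
  have hdimt : D.dim (D.itTgt (k + 1)) = k + 1 := D.aux_dim_itTgt hk
  have hdimd : D.dim d = k := by have := D.dim_precN h; omega
  refine ⟨hdimd, fun c0 hc0 => ?_⟩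
  -- From a bad cell `c0`, climb to a bad cell with a pure `≺⁻`-chain to `ω`.
  have up : ∀ v, Relation.ReflTransGen (fun a b => D.precN a b ∨ D.precP a b) c0 v →
      ∃ c', D.precP d c' ∧ Relation.ReflTransGen D.precN c' v := by
    intro v hv
    induction hv with
    | refl => exact ⟨c0, hc0, Relation.ReflTransGen.refl⟩
    | tail _ hstep ih =>
      obtain ⟨c', hc', hch⟩ := ih
      rcases hstep with hN | hP
      · exact ⟨c', hc', hch.tail hN⟩
      · exact D.aux_pushP hP hc' hch
  obtain ⟨cs, hcs, hchs⟩ := up D.top (D.le_top c0)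
  -- No bad cell has a `≺⁻`-chain to a cell of the target tower.
  have U : ∀ m, k + 1 + m ≤ D.dim D.top → ∀ c', D.precP d c' →
      Relation.ReflTransGen D.precN c' (D.itTgt (k + 1 + m)) → False := by
    intro m
    induction m with
    | zero =>
      intro _ c' hc' hch
      have hd1 : D.dim c' = k + 1 := by have := D.dim_precP hc'; omega
      rcases D.aux_rtg_dim hch with rfl | hlt
      · exact D.not_both d _ ⟨h, hc'⟩
      · simp only [Nat.add_zero] at hlt
        omega
    | succ m ih =>
      intro hm c' hc' hch
      set b := D.itTgt (k + 1 + (m + 1)) with hbdef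
      have hdb : D.dim b = k + 1 + (m + 1) := D.aux_dim_itTgt hm
      have htgtb : D.itTgt (k + 1 + m) = D.tgt b := by
        have : k + 1 + m + 1 ≤ D.dim D.top := by omega
        simpa [show k + 1 + m + 1 = k + 1 + (m + 1) by omega] using D.aux_itTgt_succ this
      have hd1 : D.dim c' = k + 1 := by have := D.dim_precP hc'; omega
      rcases hch.cases_tail with heq | ⟨y, hcy, hyb⟩
      · rw [heq] at hdb; omega
      · -- inner well-founded descent in the tree of sources of `b`
        have inner : ∀ y, D.precN y b → ∀ c'', D.precP d c'' →
            Relation.ReflTransGen D.precN c'' y → False := by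
          intro y
          induction y using WellFounded.induction (D.aux_chRel_wf b) with
          | _ y IH =>
            intro hyb c'' hc'' hch2
            rcases hch2.cases_tail with heq2 | ⟨w, hcw, hwy⟩
            · -- bad cell is itself a source of `b` : only possible at the bottom level
              subst heq2
              have hdy : D.dim y = k + 1 := by have := D.dim_precP hc''; omega
              have hdy2 : D.dim b = D.dim y + 1 := D.dim_precN hyb
              have hm0 : m = 0 := by omega
              subst hm0
              have hdt : D.precN d (D.tgt b) := by
                rw [← htgtb]
                simpa using h
              exact D.aux_lemA (by omega) hdt hyb hc''
            · -- last chain step `w ≺⁻ y ≺⁻ b`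
              obtain ⟨y₂, ⟨hne, a', b', h1, h2, hs⟩, _⟩ :=
                D.thin false false b y w (by simpa [sprec] using hwy)
                  (by simpa [sprec] using hyb)
              cases a' <;> cases b' <;> simp [sprec] at hs h1 h2
              · -- w ≺⁺ y₂ ≺⁻ b : push through target `w = γ(y₂)` and recurse
                obtain ⟨c₃, hc₃, hch₃⟩ := D.aux_pushP h1 hc'' hcw
                have hrel : D.chRel b y₂ y :=
                  ⟨h2, hyb, by rw [← D.precP_unique h1]; exact hwy⟩
                exact IH y₂ hrel h2 c₃ hc₃ hch₃
              · -- w ≺⁻ y₂ ≺⁺ b : y₂ = γ(b), chain reaches the lower tower cell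
                have : y₂ = D.tgt b := D.precP_unique h2
                refine ih (by omega) c'' hc'' ?_
                rw [htgtb, ← this]
                exact hcw.tail h1
        exact inner y hyb c' hc' hcy
  have hfin : D.itTgt (k + 1 + (D.dim D.top - (k + 1))) = D.top := by
    have hnn : k + 1 + (D.dim D.top - (k + 1)) = D.dim D.top := by omega
    rw [hnn]
    show D.tgt^[D.dim D.top - D.dim D.top] D.top = D.top
    rw [Nat.sub_self]
    rfl
  exact U (D.dim D.top - (k + 1)) (by omega) cs hcs (by rw [hfin]; exact hchs)
end

section
/- Let C be a dendritic face complex and let 0 ≤ k ≤ n. Then the iterated target γ^{(k)}ω is not a source: there is no c ∈ C with γ^{(k)}ω ≺⁻ c. -/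
section Aux

open Relation

variable {α : Type*} [Fintype α]

/-- unsigned codimension-1 relation -/
def DPrec (D : DFC α) (a b : α) : Prop := D.precN a b ∨ D.precP a b

/-- face order -/
def DLe (D : DFC α) : α → α → Prop := Relation.ReflTransGen (DPrec D)

lemma dim_dprec {D : DFC α} {a b : α} (h : DPrec D a b) : D.dim b = D.dim a + 1 :=
  h.elim D.dim_precN D.dim_precP

lemma dim_dle {D : DFC α} {a b : α} (h : DLe D a b) : D.dim a ≤ D.dim b := by
  induction h with
  | refl => exact le_refl _
  | tail _ h2 ih => have := dim_dprec h2; omega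

lemma eq_of_dle_dim {D : DFC α} {x u : α} (h : DLe D x u) (hd : D.dim x = D.dim u) : x = u := by
  rcases h.cases_head with heq | ⟨y, hxy, hyu⟩
  · exact heq
  · have h1 := dim_dprec hxy; have h2 := dim_dle hyu; omega

lemma dle_down {D : DFC α} {x u : α} {r : ℕ} (h : DLe D x u)
    (hd : D.dim u = D.dim x + (r + 1)) :
    ∃ y, DPrec D x y ∧ DLe D y u ∧ D.dim u = D.dim y + r := by
  rcases h.cases_head with heq | ⟨y, hxy, hyu⟩
  · subst heq; omega
  · exact ⟨y, hxy, hyu, by have := dim_dprec hxy; omega⟩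

lemma sprec_or {D : DFC α} {b : Bool} {x y : α}
    (h : sprec D.precN D.precP b x y) : DPrec D x y := by
  cases b
  · exact Or.inl h
  · exact Or.inr h

lemma or_sprec {D : DFC α} {x y : α} (h : DPrec D x y) :
    ∃ b, sprec D.precN D.precP b x y := by
  rcases h with h | h
  · exact ⟨false, h⟩
  · exact ⟨true, h⟩

lemma dim_itTgt' (D : DFC α) : ∀ (m : ℕ) (v : α), m ≤ D.dim v →
    D.dim v = D.dim (D.tgt^[m] v) + m := by
  intro m
  induction m with
  | zero => intro v _; simp
  | succ m ih =>
    intro v hm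
    have h1 : D.precP (D.tgt v) v := D.tgt_precP v (by omega)
    have h2 : D.dim v = D.dim (D.tgt v) + 1 := D.dim_precP h1
    have h3 := ih (D.tgt v) (by omega)
    rw [Function.iterate_succ_apply]
    omega

/-- the diamond property: any 2-chain `x ≺ y ≺ w` has exactly one complement. -/
lemma diamond (D : DFC α) {x y w : α} (b1 a1 : Bool)
    (h1 : sprec D.precN D.precP b1 x y) (h2 : sprec D.precN D.precP a1 y w) :
    ∃ y2 b2 a2, y2 ≠ y ∧ sprec D.precN D.precP b2 x y2 ∧ sprec D.precN D.precP a2 y2 w ∧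
      ((a1 = b1) ↔ ¬ (a2 = b2)) ∧
      (∀ y3 b3 a3, sprec D.precN D.precP b3 x y3 → sprec D.precN D.precP a3 y3 w →
        y3 = y ∨ y3 = y2) := by
  obtain ⟨y2, ⟨hne, a2, b2, hb, ha, hiff⟩, huniq⟩ := D.thin a1 b1 w y x h1 h2
  refine ⟨y2, b2, a2, hne, hb, ha, hiff, ?_⟩
  intro y3 b3 a3 hb3 ha3
  by_cases h31 : y3 = y
  · exact Or.inl h31
  by_cases h32 : y3 = y2
  · exact Or.inr h32
  exfalso
  by_cases hc : (a1 = b1) ↔ ¬ (a3 = b3)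
  · exact h32 (huniq y3 ⟨h31, a3, b3, hb3, ha3, hc⟩)
  · -- then (a3 = b3) ↔ (a1 = b1), use thinness at (x,y2,w)
    obtain ⟨y', ⟨hne', _⟩, huniq'⟩ := D.thin a2 b2 w y2 x hb ha
    have e1 : y = y' := huniq' y ⟨hne.symm, a1, b1, h1, h2, by tauto⟩
    have e3 : y3 = y' := huniq' y3 ⟨h32, a3, b3, hb3, ha3, by tauto⟩
    exact h31 (e3.trans e1.symm)

/-- pigeonhole for sequences in a finite type -/
lemma pigeon {f : ℕ → α} : ∃ a b : ℕ, a < b ∧ f a = f b := by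
  obtain ⟨x, y, hxy, h⟩ := Finite.exists_ne_map_eq_of_infinite f
  rcases hxy.lt_or_gt with hl | hl
  · exact ⟨x, y, hl, h⟩
  · exact ⟨y, x, hl, h.symm⟩

/-- ascending cycle kill: edges `tgt (e (j+1)) ≺⁻ e j` -/
lemma cycleN (D : DFC α) {v : α} {e : ℕ → α} {a b : ℕ} (hab : a < b) (heq : e a = e b)
    (hmem : ∀ j, D.precN (e j) v)
    (hedge : ∀ j, a ≤ j → D.precN (D.tgt (e (j + 1))) (e j)) : False := by
  refine D.no_cycle v (b - a) (by omega) (fun i => e (a + i - 1))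
    (fun i _ _ => hmem _) ?_ ?_
  · show e (a + (b - a + 1) - 1) = e (a + 1 - 1)
    have h1 : a + (b - a + 1) - 1 = b := by omega
    have h2 : a + 1 - 1 = a := by omega
    rw [h1, h2]; exact heq.symm
  · intro i h1 _
    show D.precN (D.tgt (e (a + (i + 1) - 1))) (e (a + i - 1))
    have h3 : a + (i + 1) - 1 = (a + i - 1) + 1 := by omega
    rw [h3]
    exact hedge (a + i - 1) (by omega)

/-- descending cycle kill: edges `tgt (e j) ≺⁻ e (j+1)` -/
lemma cycleN' (D : DFC α) {v : α} {e : ℕ → α} {a b : ℕ} (hab : a < b) (heq : e a = e b)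
    (hmem : ∀ j, D.precN (e j) v)
    (hedge : ∀ j, a ≤ j → D.precN (D.tgt (e j)) (e (j + 1))) : False := by
  refine D.no_cycle v (b - a) (by omega) (fun i => e (b + 1 - i))
    (fun i _ _ => hmem _) ?_ ?_
  · show e (b + 1 - (b - a + 1)) = e (b + 1 - 1)
    have h1 : b + 1 - (b - a + 1) = a := by omega
    have h2 : b + 1 - 1 = b := by omega
    rw [h1, h2]; exact heq
  · intro i h1 h2
    show D.precN (D.tgt (e (b + 1 - (i + 1)))) (e (b + 1 - i))
    have h3 : b + 1 - (i + 1) = b - i := by omega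
    have h4 : b + 1 - i = (b - i) + 1 := by omega
    rw [h3, h4]
    exact hedge (b - i) (by omega)

/-- build an infinite sequence from an invariant-preserving step relation -/
lemma exists_seq {S : Type*} (Inv : S → Prop) (R : S → S → Prop) (s0 : S) (h0 : Inv s0)
    (hstep : ∀ s, Inv s → ∃ t, Inv t ∧ R s t) :
    ∃ f : ℕ → S, f 0 = s0 ∧ (∀ j, Inv (f j)) ∧ ∀ j, R (f j) (f (j + 1)) := by
  classical
  choose g hg1 hg2 using hstep
  let F : {s // Inv s} → {s // Inv s} := fun s => ⟨g s.1 s.2, hg1 s.1 s.2⟩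
  refine ⟨fun n => (F^[n] ⟨s0, h0⟩).1, rfl, fun j => (F^[j] ⟨s0, h0⟩).2, fun j => ?_⟩
  show R (F^[j] ⟨s0, h0⟩).1 (F^[j + 1] ⟨s0, h0⟩).1
  rw [Function.iterate_succ_apply' F j]
  exact hg2 _ _

end Aux

section Main

open Relation

variable {α : Type*} [Fintype α]

lemma F1 (D : DFC α) {v e : α} (h2 : 2 ≤ D.dim v) (he : D.precN e v)
    (hne : D.tgt e ≠ D.tgt (D.tgt v)) : ∃ e', D.precN e' v ∧ D.precN (D.tgt e) e' := by
  have hde : D.dim v = D.dim e + 1 := D.dim_precN he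
  have htp : D.precP (D.tgt e) e := D.tgt_precP e (by omega)
  obtain ⟨y', ⟨hy'ne, a', b', hb', ha', hiff⟩, _⟩ := D.thin false true v e (D.tgt e) htp he
  have hab : a' = b' := by
    by_contra hcon
    exact absurd (hiff.mpr hcon) (by simp)
  cases a' with
  | false =>
    subst hab
    exact ⟨y', ha', hb'⟩
  | true =>
    subst hab
    exfalso
    have e1 : y' = D.tgt v := D.precP_unique ha'
    have e2 : D.tgt e = D.tgt y' := D.precP_unique hb'
    exact hne (by rw [e2, e1])

lemma LEM2 (D : DFC α) {v c : α} (h2 : 2 ≤ D.dim v)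
    (hz : D.precN (D.tgt (D.tgt v)) c) (hc : DLe D c v) : False := by
  classical
  have ht1 : D.precP (D.tgt v) v := D.tgt_precP v (by omega)
  have hd1 : D.dim v = D.dim (D.tgt v) + 1 := D.dim_precP ht1
  have ht2 : D.precP (D.tgt (D.tgt v)) (D.tgt v) := D.tgt_precP _ (by omega)
  have hd2 : D.dim (D.tgt v) = D.dim (D.tgt (D.tgt v)) + 1 := D.dim_precP ht2
  set z := D.tgt (D.tgt v) with hzdef
  have hdc : D.dim c = D.dim z + 1 := D.dim_precN hz
  obtain ⟨y, hcy, hyv, hdy⟩ := dle_down hc (r := 0) (by omega)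
  have hyve : y = v := eq_of_dle_dim hyv (by omega)
  rw [hyve] at hcy
  rcases hcy with hcv | hcv
  swap
  · have hcv' : c = D.tgt v := D.precP_unique hcv
    rw [hcv'] at hz
    exact D.not_both _ _ ⟨hz, ht2⟩
  have hstep : ∀ x, D.precN x v → ∃ y', D.precN y' v ∧ (D.tgt x ≠ z → D.precN (D.tgt x) y') := by
    intro x hx
    by_cases htx : D.tgt x = z
    · exact ⟨x, hx, fun hn => absurd htx hn⟩
    · obtain ⟨e', h1, h2'⟩ := F1 D h2 hx htx
      exact ⟨e', h1, fun _ => h2'⟩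
  obtain ⟨f, hf0, hfInv, hfR⟩ := exists_seq (fun x => D.precN x v)
      (fun x y' => D.tgt x ≠ z → D.precN (D.tgt x) y') c hcv hstep
  by_cases hA : ∃ j, D.tgt (f j) = z
  · have hj0 : D.tgt (f (Nat.find hA)) = z := Nat.find_spec hA
    have hmin : ∀ i, i < Nat.find hA → D.tgt (f i) ≠ z := fun i hi => Nat.find_min hA hi
    set j0 := Nat.find hA with hj0def
    refine D.no_cycle v (j0 + 1) (by omega)
      (fun i => if i = j0 + 2 then f j0 else f (j0 + 1 - i)) ?_ ?_ ?_
    · intro i h1 hi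
      show D.precN (if i = j0 + 2 then f j0 else f (j0 + 1 - i)) v
      rw [if_neg (by omega : ¬ i = j0 + 2)]
      exact hfInv _
    · show (if j0 + 1 + 1 = j0 + 2 then f j0 else f (j0 + 1 - (j0 + 1 + 1)))
        = (if 1 = j0 + 2 then f j0 else f (j0 + 1 - 1))
      rw [if_pos (by omega : j0 + 1 + 1 = j0 + 2), if_neg (by omega : ¬ (1:ℕ) = j0 + 2)]
      have h5 : j0 + 1 - 1 = j0 := by omega
      rw [h5]
    · intro i h1 hi
      show D.precN (D.tgt (if i + 1 = j0 + 2 then f j0 else f (j0 + 1 - (i + 1))))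
        (if i = j0 + 2 then f j0 else f (j0 + 1 - i))
      rw [if_neg (by omega : ¬ i = j0 + 2)]
      by_cases hip : i = j0 + 1
      · rw [if_pos (by omega : i + 1 = j0 + 2)]
        have h0 : j0 + 1 - i = 0 := by omega
        rw [h0, hf0, hj0]
        exact hz
      · rw [if_neg (by omega : ¬ i + 1 = j0 + 2)]
        have hlt : j0 + 1 - (i + 1) < j0 := by omega
        have hedge := hfR (j0 + 1 - (i + 1)) (hmin _ hlt)
        have h6 : j0 + 1 - i = (j0 + 1 - (i + 1)) + 1 := by omega
        rw [h6]
        exact hedge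
  · push_neg at hA
    obtain ⟨a, b, hab, heq⟩ := pigeon (f := f)
    exact cycleN' D hab heq hfInv (fun j _ => hfR j (hA j))

lemma LEM3 (D : DFC α) {u c : α} (h3 : 3 ≤ D.dim u)
    (hz : D.precN (D.tgt (D.tgt (D.tgt u))) c) (hc : DLe D c u) : False := by
  have ht1 : D.precP (D.tgt u) u := D.tgt_precP u (by omega)
  have hd1 : D.dim u = D.dim (D.tgt u) + 1 := D.dim_precP ht1
  have ht2 : D.precP (D.tgt (D.tgt u)) (D.tgt u) := D.tgt_precP _ (by omega)
  have hd2 : D.dim (D.tgt u) = D.dim (D.tgt (D.tgt u)) + 1 := D.dim_precP ht2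
  have ht3 : D.precP (D.tgt (D.tgt (D.tgt u))) (D.tgt (D.tgt u)) := D.tgt_precP _ (by omega)
  have hd3 : D.dim (D.tgt (D.tgt u)) = D.dim (D.tgt (D.tgt (D.tgt u))) + 1 := D.dim_precP ht3
  set z := D.tgt (D.tgt (D.tgt u)) with hzdef
  have kill : ∀ x, D.precN z x → DLe D x (D.tgt u) → False := by
    intro x hx hxle
    exact LEM2 D (v := D.tgt u) (by omega) hx hxle
  have mkD : ∀ x, D.precN z x → DLe D x u → ∃ Dx, D.precP x Dx ∧ D.precN Dx u := by
    intro x hx hxu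
    have hdx : D.dim x = D.dim z + 1 := D.dim_precN hx
    obtain ⟨y1, hxy1, hy1u, hdy1⟩ := dle_down hxu (r := 1) (by omega)
    obtain ⟨w, hy1w, hwu, hdw⟩ := dle_down hy1u (r := 0) (by omega)
    have hwv : w = u := eq_of_dle_dim hwu (by omega)
    rw [hwv] at hy1w
    rcases hy1w with hy1N | hy1P
    swap
    · exfalso
      have he : y1 = D.tgt u := D.precP_unique hy1P
      exact kill x hx (he ▸ ReflTransGen.single hxy1)
    obtain ⟨b1, hb1⟩ := or_sprec hxy1
    obtain ⟨y2, b2, a2, hne2, hb2, ha2, hrule, _⟩ :=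
      diamond D b1 false hb1 (show sprec D.precN D.precP false y1 u from hy1N)
    cases a2 with
    | true =>
      exfalso
      have he : y2 = D.tgt u := D.precP_unique ha2
      exact kill x hx (he ▸ ReflTransGen.single (sprec_or hb2))
    | false =>
      cases b1 with
      | true => exact ⟨y1, hb1, hy1N⟩
      | false =>
        have hb2t : b2 = true := by
          cases b2 with
          | false => exact absurd rfl (hrule.mp rfl)
          | true => rfl
        subst hb2t
        exact ⟨y2, hb2, ha2⟩
  have stepx : ∀ x Dx, D.precN z x → D.precP x Dx → D.precN Dx u →
      ∃ x', (D.precN z x' ∧ DLe D x' u) ∧ D.precN x' Dx := by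
    intro x Dx hzx hxD hDu
    obtain ⟨y', ⟨hne, a', b', hb', ha', hiff⟩, _⟩ := D.thin true false Dx x z hzx hxD
    have hab : a' = b' := by
      by_contra hcon
      exact absurd (hiff.mpr hcon) (by simp)
    cases a' with
    | true =>
      exfalso
      subst hab
      have e1 : y' = D.tgt Dx := D.precP_unique ha'
      have e2 : x = D.tgt Dx := D.precP_unique hxD
      exact hne (e1.trans e2.symm)
    | false =>
      subst hab
      exact ⟨y', ⟨hb', ReflTransGen.head (Or.inl ha') (ReflTransGen.single (Or.inl hDu))⟩, ha'⟩
  obtain ⟨D0, hD0P, hD0N⟩ := mkD c hz hc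
  have hstep : ∀ p : α × α, ((D.precN z p.1 ∧ DLe D p.1 u) ∧ D.precP p.1 p.2 ∧ D.precN p.2 u) →
      ∃ p' : α × α, ((D.precN z p'.1 ∧ DLe D p'.1 u) ∧ D.precP p'.1 p'.2 ∧ D.precN p'.2 u) ∧
        D.precN p'.1 p.2 := by
    rintro ⟨x, Dx⟩ ⟨⟨hzx, hxu⟩, hxD, hDu⟩
    obtain ⟨x', hx', hxD'⟩ := stepx x Dx hzx hxD hDu
    obtain ⟨D', hD'P, hD'N⟩ := mkD x' hx'.1 hx'.2
    exact ⟨(x', D'), ⟨hx', hD'P, hD'N⟩, hxD'⟩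
  obtain ⟨q, hq0, hqInv, hqR⟩ := exists_seq
      (fun p : α × α => (D.precN z p.1 ∧ DLe D p.1 u) ∧ D.precP p.1 p.2 ∧ D.precN p.2 u)
      (fun p p' => D.precN p'.1 p.2)
      (c, D0) ⟨⟨hz, hc⟩, hD0P, hD0N⟩ hstep
  obtain ⟨a, b, hab, heq⟩ := pigeon (f := fun j => (q j).2)
  refine cycleN D hab heq (fun j => (hqInv j).2.2) ?_
  intro j _
  show D.precN (D.tgt ((q (j + 1)).2)) ((q j).2)
  have e1 : (q (j + 1)).1 = D.tgt ((q (j + 1)).2) := D.precP_unique (hqInv (j + 1)).2.1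
  rw [← e1]
  exact hqR j

lemma SL (D : DFC α) {f0 v : α} (hle : DLe D f0 v) (hdim : D.dim f0 + 3 = D.dim v)
    (hn : ¬ DLe D f0 (D.tgt v)) : False := by
  obtain ⟨g0, hfg0, hg0v, hd0⟩ := dle_down hle (r := 2) (by omega)
  obtain ⟨e0, hge0, he0v, hd1⟩ := dle_down hg0v (r := 1) (by omega)
  obtain ⟨w, hew, hwv, hd2⟩ := dle_down he0v (r := 0) (by omega)
  have hw : w = v := eq_of_dle_dim hwv (by omega)
  rw [hw] at hew
  rcases hew with heN | heP
  swap
  · exact hn (by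
      have he : e0 = D.tgt v := D.precP_unique heP
      exact ReflTransGen.head hfg0 (he ▸ ReflTransGen.single hge0))
  have hstep : ∀ p : α × α, (DPrec D f0 p.1 ∧ DPrec D p.1 p.2 ∧ D.precN p.2 v) →
      ∃ p' : α × α, (DPrec D f0 p'.1 ∧ DPrec D p'.1 p'.2 ∧ D.precN p'.2 v) ∧
        (p'.1 ≠ p.1 ∧ ((D.precP p'.1 p.2 ∧ D.precN p'.1 p'.2) ∨
          (D.precN p'.1 p.2 ∧ D.precP p'.1 p'.2))) := by
    rintro ⟨g, d⟩ ⟨hfg, hgd, hdv⟩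
    obtain ⟨b0, hb0⟩ := or_sprec hfg
    obtain ⟨s1, hs1⟩ := or_sprec hgd
    obtain ⟨g', b2, a2, hg'ne, hfg', hg'd, _, _⟩ := diamond D b0 s1 hb0 hs1
    obtain ⟨d', b2', a2', hd'ne, hg'd', hd'v, hrule, _⟩ :=
      diamond D a2 false hg'd (show sprec D.precN D.precP false d v from hdv)
    cases a2' with
    | true =>
      exfalso
      apply hn
      have he : d' = D.tgt v := D.precP_unique hd'v
      exact ReflTransGen.head (sprec_or hfg') (he ▸ ReflTransGen.single (sprec_or hg'd'))
    | false =>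
      refine ⟨(g', d'), ⟨sprec_or hfg', sprec_or hg'd', hd'v⟩, hg'ne, ?_⟩
      cases a2 with
      | true =>
        have hb2'f : b2' = false := by
          cases b2' with
          | false => rfl
          | true => exact absurd (hrule.mpr (by simp)) (by simp)
        subst hb2'f
        exact Or.inl ⟨hg'd, hg'd'⟩
      | false =>
        have hb2't : b2' = true := by
          cases b2' with
          | false => exact absurd rfl (hrule.mp rfl)
          | true => rfl
        subst hb2't
        exact Or.inr ⟨hg'd, hg'd'⟩
  obtain ⟨q, hq0, hqInv, hqR⟩ := exists_seq
      (fun p : α × α => DPrec D f0 p.1 ∧ DPrec D p.1 p.2 ∧ D.precN p.2 v)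
      (fun p p' => p'.1 ≠ p.1 ∧ ((D.precP p'.1 p.2 ∧ D.precN p'.1 p'.2) ∨
          (D.precN p'.1 p.2 ∧ D.precP p'.1 p'.2)))
      (g0, e0) ⟨hfg0, hge0, heN⟩ hstep
  have claimA : ∀ j, (D.precN (q (j+1)).1 (q j).2 ∧ D.precP (q (j+1)).1 (q (j+1)).2) →
      (D.precN (q (j+2)).1 (q (j+1)).2 ∧ D.precP (q (j+2)).1 (q (j+2)).2) := by
    intro j hj
    obtain ⟨hne, hR⟩ := hqR (j+1)
    rcases hR with ⟨hP2, _⟩ | h2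
    · exfalso
      have e1 : (q (j+2)).1 = D.tgt ((q (j+1)).2) := D.precP_unique hP2
      have e2 : (q (j+1)).1 = D.tgt ((q (j+1)).2) := D.precP_unique hj.2
      exact hne (e1.trans e2.symm)
    · exact h2
  by_cases hD : ∃ N, D.precN (q (N+1)).1 (q N).2 ∧ D.precP (q (N+1)).1 (q (N+1)).2
  · obtain ⟨N, hN⟩ := hD
    have hall : ∀ k, D.precN (q (N+k+1)).1 (q (N+k)).2 ∧ D.precP (q (N+k+1)).1 (q (N+k+1)).2 := by
      intro k
      induction k with
      | zero => exact hN
      | succ k ih => exact claimA (N+k) ih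
    obtain ⟨a, b, hab, heq⟩ := pigeon (f := fun k => (q (N+k)).2)
    refine cycleN D hab heq (fun j => (hqInv (N+j)).2.2) ?_
    intro j _
    show D.precN (D.tgt ((q (N+(j+1))).2)) ((q (N+j)).2)
    have e1 : (q (N+j+1)).1 = D.tgt ((q (N+j+1)).2) := D.precP_unique (hall j).2
    have e2 : N + (j+1) = N + j + 1 := by omega
    rw [e2, ← e1]
    exact (hall j).1
  · have hUP : ∀ j, D.precP (q (j+1)).1 (q j).2 ∧ D.precN (q (j+1)).1 (q (j+1)).2 := by
      intro j
      rcases (hqR j).2 with h | h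
      · exact h
      · exact absurd ⟨j, h.1, h.2⟩ hD
    obtain ⟨a, b, hab, heq⟩ := pigeon (f := fun k => (q k).2)
    refine cycleN' D hab heq (fun j => (hqInv j).2.2) ?_
    intro j _
    show D.precN (D.tgt ((q j).2)) ((q (j+1)).2)
    have e1 : (q (j+1)).1 = D.tgt ((q j).2) := D.precP_unique (hUP j).1
    rw [← e1]
    exact (hUP j).2

lemma GEN (D : DFC α) : ∀ (r : ℕ) (f0 v : α), DLe D f0 v → D.dim f0 + 3 + r = D.dim v →
    DLe D f0 (D.tgt v) := by
  intro r
  induction r with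
  | zero =>
    intro f0 v h hd
    by_contra hn
    exact SL D h (by omega) hn
  | succ r ih =>
    intro f0 v h hd
    obtain ⟨g, hfg, hgv, hdim⟩ := dle_down h (r := r + 3) (by omega)
    exact ReflTransGen.head hfg (ih g v hgv (by omega))

lemma MAIN (D : DFC α) : ∀ (m : ℕ) (u c : α), m ≤ D.dim u →
    D.precN (D.tgt^[m] u) c → DLe D c u → False := by
  intro m
  induction m with
  | zero =>
    intro u c _ h hle
    simp only [Function.iterate_zero, id_eq] at h
    have h1 := D.dim_precN h
    have h2 := dim_dle hle
    omega
  | succ m ih =>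
    rcases m with _ | _ | _ | k
    · -- m+1 = 1
      intro u c hm h hle
      rw [Function.iterate_one] at h
      have ht : D.precP (D.tgt u) u := D.tgt_precP u hm
      have hd : D.dim u = D.dim (D.tgt u) + 1 := D.dim_precP ht
      have hdc : D.dim c = D.dim (D.tgt u) + 1 := D.dim_precN h
      have hcu : c = u := eq_of_dle_dim hle (by omega)
      subst hcu
      exact D.not_both _ _ ⟨h, ht⟩
    · -- m+1 = 2
      intro u c hm h hle
      have h' : D.precN (D.tgt (D.tgt u)) c := by
        simpa [Function.iterate_succ_apply', Function.iterate_one] using h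
      exact LEM2 D hm h' hle
    · -- m+1 = 3
      intro u c hm h hle
      have h' : D.precN (D.tgt (D.tgt (D.tgt u))) c := by
        simpa [Function.iterate_succ_apply', Function.iterate_one] using h
      exact LEM3 D hm h' hle
    · -- m+1 = k+4
      intro u c hm h hle
      have hdz := dim_itTgt' D (k+4) u hm
      have hdc : D.dim c = D.dim (D.tgt^[k+4] u) + 1 := D.dim_precN h
      have hge : DLe D c (D.tgt u) := GEN D k c u hle (by omega)
      have ht : D.precP (D.tgt u) u := D.tgt_precP u (by omega)
      have hd : D.dim u = D.dim (D.tgt u) + 1 := D.dim_precP ht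
      rw [Function.iterate_succ_apply] at h
      exact ih (D.tgt u) c (by omega) h hge

end Main

/-- for `0 ≤ k ≤ n`, the iterated target `γ^{(k)}ω` is not a source. -/
theorem dfc_itTgt_not_source {α : Type*} [Fintype α] (D : DFC α) (k : ℕ)
    (hk : k ≤ D.dim D.top) :
    ∀ c, ¬ D.precN (D.itTgt k) c := by
  intro c hc
  exact MAIN D (D.dim D.top - k) D.top c (Nat.sub_le _ _) hc (D.le_top c)
end
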